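/- arXiv:2106.04416 — 7 statements merged into one kernel-verified Lean document; each statement's English description precedes it below -/
import Mathlib

section
/- Let T and S be two X-compatible staged trees with the same variable order X_1,…,X_p (i.e., the permutation π is the identity). If M_T ⊆ M_S, then CID(T, S) = 0. -/
/-!
Staged trees, staged tree models, interventional distributions and the
context-specific interventional discrepancy (CID).

Variables are `X 0, …, X (p-1)`; an `X_π`-compatible staged tree for a
permutation `π` of `Fin p` is a staged tree for the variable order
`X (π 0), …, X (π (p-1))` (so the variable `j` precedes the variable `i`
in its order iff `π.symm j < π.symm i`).  Contexts at depth `i` are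
represented by full vectors (only the coordinates preceding `i` matter),
and the staging at each variable `i` is encoded as an equivalence relation
("being in the same stage") on full vectors which only depends on the
coordinates preceding `i` in the order.
-/

/-- A (stratified) staged tree for the variable order given by the permutation `π`. -/
structure StagedTree (p : ℕ) (X : Fin p → Type*) (π : Equiv.Perm (Fin p)) where
  /-- `stage i x y` : the contexts determined by `x` and `y` are in the same
  stage at the depth of variable `i`. -/
  stage : ∀ i : Fin p, (∀ j, X j) → (∀ j, X j) → Prop
  stage_equiv : ∀ i, Equivalence (stage i)
  /-- being in the same stage only depends on the coordinates preceding `i`: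
  two vectors agreeing on all preceding coordinates are in the same stage. -/
  stage_local : ∀ (i : Fin p) (x y : ∀ j, X j),
    (∀ j : Fin p, π.symm j < π.symm i → x j = y j) → stage i x y

variable {p : ℕ} {X : Fin p → Type*} [∀ i, Fintype (X i)] [∀ i, DecidableEq (X i)]
  {π : Equiv.Perm (Fin p)}

/-- Valid parameters for a staged tree: a strictly positive conditional
distribution on `X i` for each stage at the depth of variable `i`. -/
def IsParam (T : StagedTree p X π) (θ : ∀ i : Fin p, (∀ j, X j) → X i → ℝ) : Prop :=
  (∀ i x a, 0 < θ i x a) ∧ (∀ i x, ∑ a : X i, θ i x a = 1) ∧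
    ∀ i x y, T.stage i x y → θ i x = θ i y

/-- The joint distribution induced by the parameters `θ`:
`P_θ(x) = ∏ i, θ(stage of x at depth of i, x i)`. -/
def joint (θ : ∀ i : Fin p, (∀ j, X j) → X i → ℝ) : (∀ j, X j) → ℝ :=
  fun x => ∏ i : Fin p, θ i x (x i)

/-- The staged tree model `M_T`: all joint distributions induced by valid parameters. -/
def Model (T : StagedTree p X π) : Set ((∀ j, X j) → ℝ) :=
  {P | ∃ θ, IsParam T θ ∧ P = joint θ}

/-- The interventional distribution `P_θ(X = x | do(X_I = z_I))`. -/
def interv (θ : ∀ i : Fin p, (∀ j, X j) → X i → ℝ) (I : Finset (Fin p))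
    (z : ∀ j, X j) : (∀ j, X j) → ℝ :=
  fun x => (∏ i ∈ Iᶜ, θ i x (x i)) * ∏ i ∈ I, (if x i = z i then (1 : ℝ) else 0)

/-- The class of interventional distributions induced by a staged tree,
for all valid parameters `θ`, intervention targets `I ⊆ [p]` and values `z`. -/
def IntervClass (T : StagedTree p X π) : Set ((∀ j, X j) → ℝ) :=
  {f | ∃ θ, IsParam T θ ∧ ∃ (I : Finset (Fin p)) (z : ∀ j, X j), f = interv θ I z}

/-- The conditional probability `P(X i = a | X ∈ E)` of a finitely supported
distribution `P`. -/
noncomputable def condP (P : (∀ j, X j) → ℝ) (i : Fin p) (a : X i)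
    (E : Set (∀ j, X j)) : ℝ :=
  (∑ x : ∀ j, X j, ({y | y ∈ E ∧ y i = a}).indicator P x) /
    (∑ x : ∀ j, X j, E.indicator P x)

/-- The event `X_{[i-1]} = x_{[i-1]}`. -/
def ctxEvent (i : Fin p) (x : ∀ j, X j) : Set (∀ j, X j) :=
  {y | ∀ j : Fin p, j < i → y j = x j}

/-- The event `X_I ∈ D` from the definition of CID, where
`I = {j : j < i and j precedes i in the order of S}` and
`D = {y_I : y extends to a vector lying in the same S-stage (at the depth of
variable i in S) as w}`. -/
def stageEvent (S : StagedTree p X π) (i : Fin p) (w : ∀ j, X j) : Set (∀ j, X j) :=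
  {y | ∃ z : ∀ j, X j, S.stage i z w ∧
    ∀ j : Fin p, π.symm j < π.symm i → j < i → z j = y j}

/-- The interventional distribution `P(X_i | do(X_{[i-1]} = x_{[i-1]}))` is wrongly
inferred by `S` with respect to the `X`-compatible staged tree `T` if there are
`P ∈ M_T`, a value `a` of `X i` and an extension `w` of the context of `x` (to the
coordinates `J` of the variables preceding `i` in `S` but following it in `T`;
coordinates outside `K = I ∪ J` are irrelevant) with
`P(X_i = a | X_{[i-1]} = x_{[i-1]}) ≠ P(X_i = a | X_I ∈ D)`. -/
def WronglyInferred (T : StagedTree p X 1) (S : StagedTree p X π) (i : Fin p)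
    (x : ∀ j, X j) : Prop :=
  ∃ P ∈ Model T, ∃ (a : X i) (w : ∀ j, X j),
    (∀ j : Fin p, j < i → w j = x j) ∧
    condP P i a (ctxEvent i x) ≠ condP P i a (stageEvent S i w)

/-- The context-specific interventional discrepancy `CID(T, S) = ∑ i CID_i(T, S)`,
where `CID_i` is the proportion of contexts `x_{[i-1]}` wrongly inferred by `S` with
respect to `T`.  (The proportion is computed over full vectors; since the predicate
only depends on the coordinates `j < i`, this is the same proportion as over
contexts `x_{[i-1]} ∈ 𝕏_{[i-1]}`.) -/
noncomputable def CID (T : StagedTree p X 1) (S : StagedTree p X π) : ℝ :=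
  ∑ i : Fin p,
    (Nat.card {x : ∀ j, X j // WronglyInferred T S i x} : ℝ) /
      (Nat.card (∀ j, X j) : ℝ)

section Aux

open Finset

variable [∀ i, Nonempty (X i)]

/-- Summing over an extra copy of the `m`-th coordinate. -/
lemma sum_update_aux (m : Fin p) (f : (∀ j, X j) → ℝ) :
    ∑ z : ∀ j, X j, ∑ a : X m, f (Function.update z m a)
      = (Fintype.card (X m) : ℝ) * ∑ y, f y := by
  classical
  set e := Equiv.piSplitAt m X with he
  have hupd : ∀ (z : ∀ j, X j) (a : X m),
      Function.update z m a = e.symm (a, fun j => z j.1) := by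
    intro z a
    funext j
    by_cases hj : j = m
    · subst hj; simp [he, Equiv.piSplitAt]
    · simp [he, Equiv.piSplitAt, Function.update, hj]
  calc ∑ z : ∀ j, X j, ∑ a : X m, f (Function.update z m a)
      = ∑ a : X m, ∑ z : ∀ j, X j, f (e.symm (a, fun j => z j.1)) := by
        rw [Finset.sum_comm]
        refine Finset.sum_congr rfl fun a _ => Finset.sum_congr rfl fun z _ => by
          rw [hupd]
    _ = ∑ a : X m, ∑ q : X m × (∀ j : {j // j ≠ m}, X j), f (e.symm (a, q.2)) := by
        refine Finset.sum_congr rfl fun a _ => ?_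
        rw [← Equiv.sum_comp e (fun q => f (e.symm (a, q.2)))]
        refine Finset.sum_congr rfl fun z _ => rfl
    _ = ∑ a : X m, ∑ b : X m, ∑ g : (∀ j : {j // j ≠ m}, X j), f (e.symm (a, g)) := by
        refine Finset.sum_congr rfl fun a _ => by rw [Fintype.sum_prod_type]
    _ = (Fintype.card (X m) : ℝ) *
          ∑ a : X m, ∑ g : (∀ j : {j // j ≠ m}, X j), f (e.symm (a, g)) := by
        rw [Finset.mul_sum]
        refine Finset.sum_congr rfl fun a _ => ?_
        rw [Finset.sum_const, Finset.card_univ, nsmul_eq_mul]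
    _ = (Fintype.card (X m) : ℝ) * ∑ q : X m × (∀ j : {j // j ≠ m}, X j), f (e.symm q) := by
        rw [Fintype.sum_prod_type]
    _ = (Fintype.card (X m) : ℝ) * ∑ y, f y := by
        rw [Equiv.sum_comp e.symm f]

/-- Slices of a function ignoring coordinate `i` all have the same sum. -/
lemma sum_slice_aux (i : Fin p) (h : (∀ j, X j) → ℝ)
    (hh : ∀ (z : ∀ j, X j) (a : X i), h (Function.update z i a) = h z) (a : X i) :
    (Fintype.card (X i) : ℝ) * ∑ y, (if y i = a then h y else 0) = ∑ z, h z := by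
  classical
  rw [← sum_update_aux i (fun y => if y i = a then h y else 0)]
  refine Finset.sum_congr rfl fun z _ => ?_
  have : ∀ b : X i, (if Function.update z i b i = a then h (Function.update z i b) else 0)
      = if b = a then h z else 0 := by
    intro b
    simp [Function.update_self, hh]
  simp only [this]
  simp

/-- Marginalization: summing out the coordinates in `U` against the transition
probabilities `θ`. -/
lemma sum_mul_prod_tail (θ : ∀ i : Fin p, (∀ j, X j) → X i → ℝ)
    (hs : ∀ i x, ∑ a : X i, θ i x a = 1)
    (hloc : ∀ (i : Fin p) (x y : ∀ j, X j), (∀ j, j < i → x j = y j) → θ i x = θ i y)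
    (U : Finset (Fin p)) (c : (∀ j, X j) → ℝ)
    (hc : ∀ y y' : ∀ j, X j, (∀ j, j ∉ U → y j = y' j) → c y = c y') :
    ∑ y : ∀ j, X j, c y * ∏ j ∈ U, θ j y (y j)
      = (∑ y : ∀ j, X j, c y) / ∏ j ∈ U, (Fintype.card (X j) : ℝ) := by
  classical
  induction U using Finset.induction_on_max generalizing c with
  | empty => simp
  | insert m s hms ih =>
    have hm : m ∉ s := fun hmem => lt_irrefl m (hms m hmem)
    have hcard : (Fintype.card (X m) : ℝ) ≠ 0 := by
      exact_mod_cast Fintype.card_ne_zero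
    have key : ∀ (z : ∀ j, X j) (a : X m),
        c (Function.update z m a) * ∏ j ∈ insert m s,
            θ j (Function.update z m a) ((Function.update z m a) j)
          = c z * (θ m z a * ∏ j ∈ s, θ j z (z j)) := by
      intro z a
      have hcz : c (Function.update z m a) = c z := by
        refine hc _ _ fun j hj => ?_
        have hjm : j ≠ m := fun hh' => hj (hh' ▸ Finset.mem_insert_self m s)
        simp [Function.update_of_ne hjm]
      have hθm : θ m (Function.update z m a) = θ m z := by
        refine hloc m _ _ fun j hj => ?_
        exact Function.update_of_ne (ne_of_lt hj) a z
      have hθs : ∀ j ∈ s, θ j (Function.update z m a) ((Function.update z m a) j)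
          = θ j z (z j) := by
        intro j hj
        have hjm : j ≠ m := ne_of_lt (hms j hj)
        have h1 : θ j (Function.update z m a) = θ j z := by
          refine hloc j _ _ fun k hk => ?_
          have : k ≠ m := ne_of_lt (lt_trans hk (hms j hj))
          exact Function.update_of_ne this a z
        rw [h1, Function.update_of_ne hjm]
      rw [Finset.prod_insert hm, Finset.prod_congr rfl hθs, hcz, hθm,
        Function.update_self]
    have hstep : (Fintype.card (X m) : ℝ) *
        ∑ y : ∀ j, X j, c y * ∏ j ∈ insert m s, θ j y (y j)
          = ∑ z : ∀ j, X j, c z * ∏ j ∈ s, θ j z (z j) := by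
      rw [← sum_update_aux m (fun y => c y * ∏ j ∈ insert m s, θ j y (y j))]
      refine Finset.sum_congr rfl fun z _ => ?_
      calc ∑ a : X m, c (Function.update z m a) * ∏ j ∈ insert m s,
              θ j (Function.update z m a) ((Function.update z m a) j)
          = ∑ a : X m, c z * (θ m z a * ∏ j ∈ s, θ j z (z j)) :=
            Finset.sum_congr rfl fun a _ => key z a
        _ = c z * ∏ j ∈ s, θ j z (z j) := by
            rw [← Finset.mul_sum, ← Finset.sum_mul, hs m z, one_mul]
    have hch : ∀ y y' : ∀ j, X j, (∀ j, j ∉ s → y j = y' j) → c y = c y' := by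
      intro y y' hyy'
      exact hc y y' fun j hj => hyy' j fun hjs => hj (Finset.mem_insert_of_mem hjs)
    have hrec := ih c hch
    have : ∑ y : ∀ j, X j, c y * ∏ j ∈ insert m s, θ j y (y j)
        = (∑ z : ∀ j, X j, c z * ∏ j ∈ s, θ j z (z j)) / (Fintype.card (X m) : ℝ) := by
      rw [eq_div_iff hcard]
      linarith [hstep]
    rw [this, hrec, Finset.prod_insert hm]
    rw [div_div, mul_comm]

/-- The conditional probability of `X i = a` given an event `E` that only depends on
coordinates `< i` and on which the stage of `i` is constant. -/
lemma condP_joint_eq (θ : ∀ i : Fin p, (∀ j, X j) → X i → ℝ)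
    (hp : ∀ i x a, 0 < θ i x a)
    (hs : ∀ i x, ∑ a : X i, θ i x a = 1)
    (hloc : ∀ (i : Fin p) (x y : ∀ j, X j), (∀ j, j < i → x j = y j) → θ i x = θ i y)
    (i : Fin p) (a : X i) (E : Set (∀ j, X j))
    (hE : ∀ y y' : ∀ j, X j, (∀ j, j < i → y j = y' j) → (y ∈ E ↔ y' ∈ E))
    (x₀ : ∀ j, X j) (hx₀ : x₀ ∈ E)
    (hcst : ∀ y ∈ E, θ i y = θ i x₀) :
    condP (joint θ) i a E = θ i x₀ a := by
  classical
  -- the "prefix" weight, ignoring the value at `i`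
  set h : (∀ j, X j) → ℝ :=
    fun y => if y ∈ E then ∏ j ∈ Finset.Iio i, θ j y (y j) else 0 with hh
  have hh_upd : ∀ (z : ∀ j, X j) (b : X i), h (Function.update z i b) = h z := by
    intro z b
    have hEmem : Function.update z i b ∈ E ↔ z ∈ E := by
      refine hE _ _ fun j hj => Function.update_of_ne (ne_of_lt hj) b z
    have hprod : ∏ j ∈ Finset.Iio i, θ j (Function.update z i b)
        ((Function.update z i b) j) = ∏ j ∈ Finset.Iio i, θ j z (z j) := by
      refine Finset.prod_congr rfl fun j hj => ?_
      have hji : j < i := Finset.mem_Iio.mp hj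
      have h1 : θ j (Function.update z i b) = θ j z := by
        refine hloc j _ _ fun k hk => ?_
        exact Function.update_of_ne (ne_of_lt (lt_trans hk hji)) b z
      rw [h1, Function.update_of_ne (ne_of_lt hji)]
    simp only [hh, hEmem, hprod]
  -- slice sums
  set M : ℝ := (∑ z : ∀ j, X j, h z) / (Fintype.card (X i) : ℝ) with hM
  have hcardi : (0 : ℝ) < (Fintype.card (X i) : ℝ) := by
    exact_mod_cast Fintype.card_pos
  have hm : ∀ b : X i,
      ∑ y : ∀ j, X j, (if y ∈ E ∧ y i = b then ∏ j ∈ Finset.Iio i, θ j y (y j) else 0)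
        = M := by
    intro b
    have h1 : ∀ y : ∀ j, X j,
        (if y ∈ E ∧ y i = b then ∏ j ∈ Finset.Iio i, θ j y (y j) else 0)
          = if y i = b then h y else 0 := by
      intro y
      by_cases h2 : y i = b <;> by_cases h3 : y ∈ E <;> simp [hh, h2, h3]
    rw [Finset.sum_congr rfl fun y _ => h1 y]
    have := sum_slice_aux i h hh_upd b
    rw [hM, eq_div_iff (ne_of_gt hcardi), ← this]
    ring
  have hMpos : 0 < M := by
    have : 0 < ∑ y : ∀ j, X j,
        (if y ∈ E ∧ y i = a then ∏ j ∈ Finset.Iio i, θ j y (y j) else 0) := by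
      refine Finset.sum_pos' (fun y _ => ?_) ?_
      · by_cases h2 : y ∈ E ∧ y i = a
        · simp only [h2, if_true]
          exact le_of_lt (Finset.prod_pos fun j _ => hp j y (y j))
        · simp [h2]
      · refine ⟨Function.update x₀ i a, Finset.mem_univ _, ?_⟩
        have hmem : Function.update x₀ i a ∈ E := by
          rw [hE _ x₀ fun j hj => Function.update_of_ne (ne_of_lt hj) a x₀]
          exact hx₀
        simp only [hmem, Function.update_self, and_self, if_true]
        exact Finset.prod_pos fun j _ => hp j _ _
    rw [← hm a]; exact this
  -- the partition of `univ` into `Iic i` and `Ioi i`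
  have huniv : Finset.Iic i ∪ Finset.Ioi i = (Finset.univ : Finset (Fin p)) := by
    ext j; simp [le_or_gt]
  have hdisj : Disjoint (Finset.Iic i) (Finset.Ioi i) := by
    rw [Finset.disjoint_left]
    intro j hj hj'
    exact absurd (Finset.mem_Iic.mp hj) (not_le.mpr (Finset.mem_Ioi.mp hj'))
  have hjoint : ∀ y : ∀ j, X j, joint θ y
      = (∏ j ∈ Finset.Iic i, θ j y (y j)) * ∏ j ∈ Finset.Ioi i, θ j y (y j) := by
    intro y
    rw [joint, ← Finset.prod_union hdisj, huniv]
  set Q : ℝ := ∏ j ∈ Finset.Ioi i, (Fintype.card (X j) : ℝ) with hQ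
  have hQpos : 0 < Q := Finset.prod_pos fun j _ => by exact_mod_cast Fintype.card_pos
  -- the sliced numerators
  have hN : ∀ b : X i,
      ∑ y : ∀ j, X j, (if y ∈ E ∧ y i = b then joint θ y else 0)
        = θ i x₀ b * M / Q := by
    intro b
    set c : (∀ j, X j) → ℝ :=
      fun y => if y ∈ E ∧ y i = b then ∏ j ∈ Finset.Iic i, θ j y (y j) else 0 with hcdef
    have hcloc : ∀ y y' : ∀ j, X j,
        (∀ j, j ∉ Finset.Ioi i → y j = y' j) → c y = c y' := by
      intro y y' hyy'
      have hagree : ∀ j, j ≤ i → y j = y' j := fun j hj =>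
        hyy' j (by simp [Finset.mem_Ioi, not_lt.mpr hj])
      have hEiff : y ∈ E ↔ y' ∈ E := hE y y' fun j hj => hagree j (le_of_lt hj)
      have hyi : y i = y' i := hagree i le_rfl
      have hprod : ∏ j ∈ Finset.Iic i, θ j y (y j)
          = ∏ j ∈ Finset.Iic i, θ j y' (y' j) := by
        refine Finset.prod_congr rfl fun j hj => ?_
        have hji : j ≤ i := Finset.mem_Iic.mp hj
        have h1 : θ j y = θ j y' := hloc j _ _ fun k hk =>
          hagree k (le_of_lt (lt_of_lt_of_le hk hji))
        rw [h1, hagree j hji]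
      simp only [hcdef, hEiff, hyi, hprod]
    have h1 : ∀ y : ∀ j, X j, (if y ∈ E ∧ y i = b then joint θ y else 0)
        = c y * ∏ j ∈ Finset.Ioi i, θ j y (y j) := by
      intro y
      by_cases h2 : y ∈ E ∧ y i = b
      · simp only [hcdef, h2, if_true, hjoint y]
        simp
      · simp [hcdef, h2]
    rw [Finset.sum_congr rfl fun y _ => h1 y,
      sum_mul_prod_tail θ hs hloc (Finset.Ioi i) c hcloc]
    have hsplit : ∀ y : ∀ j, X j,
        c y = θ i x₀ b * (if y ∈ E ∧ y i = b then ∏ j ∈ Finset.Iio i, θ j y (y j) else 0) := by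
      intro y
      by_cases h2 : y ∈ E ∧ y i = b
      · have hIic : ∏ j ∈ Finset.Iic i, θ j y (y j)
            = θ i y (y i) * ∏ j ∈ Finset.Iio i, θ j y (y j) := by
          rw [← Finset.Iio_insert i, Finset.prod_insert (by simp)]
        have hθi : θ i y b = θ i x₀ b := by
          rw [hcst y h2.1]
        simp only [hcdef, h2, if_true, and_self, hIic, hθi]
      · simp [hcdef, h2]
    rw [Finset.sum_congr rfl fun y _ => hsplit y, ← Finset.mul_sum, hm b]
  -- conclude
  have hnum : ∑ x : ∀ j, X j, ({y | y ∈ E ∧ y i = a}).indicator (joint θ) x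
      = θ i x₀ a * M / Q := by
    rw [← hN a]
    refine Finset.sum_congr rfl fun y _ => ?_
    rw [Set.indicator_apply]
    simp only [Set.mem_setOf_eq]
  have hden : ∑ x : ∀ j, X j, E.indicator (joint θ) x = M / Q := by
    have h1 : ∀ y : ∀ j, X j, E.indicator (joint θ) y
        = ∑ b : X i, (if y ∈ E ∧ y i = b then joint θ y else 0) := by
      intro y
      rw [Set.indicator_apply]
      by_cases h2 : y ∈ E
      · simp [h2]
      · simp [h2]
    rw [Finset.sum_congr rfl fun y _ => h1 y, Finset.sum_comm]
    rw [Finset.sum_congr rfl fun b _ => hN b]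
    rw [← Finset.sum_div, ← Finset.sum_mul, hs i x₀, one_mul]
  rw [condP, hnum, hden]
  rw [mul_div_assoc]
  rw [mul_div_assoc] at *
  field_simp

end Aux

/-- If `T` and `S` are two `X`-compatible staged trees with the same
variable order `X_1, …, X_p` (the permutation is the identity) and `M_T ⊆ M_S`,
then `CID(T, S) = 0`. -/
theorem cid_eq_zero_of_model_subset [∀ i, Nontrivial (X i)]
    (T S : StagedTree p X 1) (h : Model T ⊆ Model S) :
    CID T S = 0 := by
  classical
  have hnot : ∀ (i : Fin p) (x : ∀ j, X j), ¬ WronglyInferred T S i x := by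
    rintro i x ⟨P, hP, a, w, hw, hne⟩
    obtain ⟨θ, ⟨hp, hs, hst⟩, rfl⟩ := h hP
    have hone : ∀ j : Fin p, (1 : Equiv.Perm (Fin p)).symm j = j := fun j => rfl
    have hloc : ∀ (i : Fin p) (x y : ∀ j, X j),
        (∀ j, j < i → x j = y j) → θ i x = θ i y := by
      intro i x y hxy
      exact hst i x y (S.stage_local i x y fun j hj => hxy j (by simpa [hone] using hj))
    have hctx : condP (joint θ) i a (ctxEvent i x) = θ i x a := by
      refine condP_joint_eq θ hp hs hloc i a _ ?_ x ?_ ?_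
      · intro y y' hyy'
        constructor
        · intro hy j hj; rw [← hyy' j hj]; exact hy j hj
        · intro hy j hj; rw [hyy' j hj]; exact hy j hj
      · intro j hj; rfl
      · intro y hy
        exact hloc i y x hy
    have hstg : condP (joint θ) i a (stageEvent S i w) = θ i w a := by
      refine condP_joint_eq θ hp hs hloc i a _ ?_ w ?_ ?_
      · intro y y' hyy'
        constructor
        · rintro ⟨z, hz, hzy⟩
          exact ⟨z, hz, fun j hj1 hj2 => (hzy j hj1 hj2).trans (hyy' j hj2)⟩
        · rintro ⟨z, hz, hzy⟩
          exact ⟨z, hz, fun j hj1 hj2 => (hzy j hj1 hj2).trans (hyy' j hj2).symm⟩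
      · exact ⟨w, (S.stage_equiv i).refl w, fun j _ _ => rfl⟩
      · rintro y ⟨z, hz, hzy⟩
        have h1 : θ i y = θ i z := by
          refine hst i y z (S.stage_local i y z fun j hj => ?_)
          have hj' : j < i := by simpa [hone] using hj
          exact (hzy j hj hj').symm
        have h2 : θ i z = θ i w := hst i z w hz
        rw [h1, h2]
    have hwx : θ i w a = θ i x a := by rw [hloc i w x hw]
    exact hne (by rw [hctx, hstg, hwx])
  rw [CID]
  refine Finset.sum_eq_zero fun i _ => ?_
  have : IsEmpty {x : ∀ j, X j // WronglyInferred T S i x} :=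
    ⟨fun ⟨x, hx⟩ => hnot i x hx⟩
  rw [Nat.card_of_isEmpty]
  simp
end

section
/- Let T be the X-compatible staged tree representing the full independence model, i.e., for every i ∈ [p] the staging of T at depth i−1 is the trivial partition with a single stage containing all contexts of 𝕏_{[i−1]} (so that under every P ∈ M_T the variables X_1,…,X_p are mutually independent). Then CID(T, S) = 0 for every permutation π of [p] and every X_π-compatible staged tree S. -/
variable {p : ℕ} {X : Fin p → Type*} [∀ i, Fintype (X i)] [∀ i, DecidableEq (X i)]
  {π : Equiv.Perm (Fin p)}

omit [∀ i, Fintype (X i)] [∀ i, DecidableEq (X i)] in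
lemma piSplitAt_symm_update (i : Fin p) (b b' : X i) (y : ∀ j : {j // j ≠ i}, X j) :
    (Equiv.piSplitAt i X).symm (b, y)
      = Function.update ((Equiv.piSplitAt i X).symm (b', y)) i b := by
  funext j
  by_cases h : j = i
  · subst h; simp [Equiv.piSplitAt_symm_apply, Function.update_self]
  · simp [Equiv.piSplitAt_symm_apply, h, Function.update_of_ne h]

lemma condP_const (g : ∀ j : Fin p, X j → ℝ) (hg0 : ∀ j a, 0 < g j a)
    (hg1 : ∀ j, ∑ a, g j a = 1)
    (i : Fin p) (a : X i) (E : Set (∀ j, X j)) (hne : E.Nonempty)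
    (hE : ∀ x (b : X i), x ∈ E → Function.update x i b ∈ E) :
    condP (fun x => ∏ j, g j (x j)) i a E = g i a := by
  classical
  set e := Equiv.piSplitAt i X with he
  have hmem : ∀ (b : X i) (y : ∀ j : {j // j ≠ i}, X j),
      (e.symm (b, y) ∈ E ↔ e.symm (a, y) ∈ E) := by
    intro b y
    constructor
    · intro h
      have := hE _ a h
      rwa [← piSplitAt_symm_update i a b y] at this
    · intro h
      have := hE _ b h
      rwa [← piSplitAt_symm_update i b a y] at this
  have hcoord : ∀ (b : X i) (y : ∀ j : {j // j ≠ i}, X j), (e.symm (b, y)) i = b := by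
    intro b y; simp [he, Equiv.piSplitAt_symm_apply]
  have hprod : ∀ (b : X i) (y : ∀ j : {j // j ≠ i}, X j),
      (∏ j, g j ((e.symm (b, y)) j))
        = g i b * ∏ j ∈ ({i}ᶜ : Finset (Fin p)), g j ((e.symm (a, y)) j) := by
    intro b y
    rw [Fintype.prod_eq_mul_prod_compl i, hcoord]
    congr 1
    refine Finset.prod_congr rfl ?_
    intro j hj
    rw [Finset.mem_compl, Finset.mem_singleton] at hj
    rw [piSplitAt_symm_update i b a y, Function.update_of_ne hj]
  set h : (∀ j : {j // j ≠ i}, X j) → ℝ :=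
    fun y => ∏ j ∈ ({i}ᶜ : Finset (Fin p)), g j ((e.symm (a, y)) j) with hh
  set C : ℝ := ∑ y : ∀ j : {j // j ≠ i}, X j, if e.symm (a, y) ∈ E then h y else 0 with hC
  have hD : (∑ x : ∀ j, X j, E.indicator (fun x => ∏ j, g j (x j)) x) = C := by
    rw [← Equiv.sum_comp e.symm]
    rw [Fintype.sum_prod_type]
    have : ∀ b y, E.indicator (fun x => ∏ j, g j (x j)) (e.symm (b, y))
        = g i b * (if e.symm (a, y) ∈ E then h y else 0) := by
      intro b y
      rw [Set.indicator_apply]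
      by_cases hq : e.symm (a, y) ∈ E
      · rw [if_pos ((hmem b y).2 hq), if_pos hq, hprod]
      · rw [if_neg (fun hc => hq ((hmem b y).1 hc)), if_neg hq, mul_zero]
    simp_rw [this, ← Finset.mul_sum, ← Finset.sum_mul, hg1, one_mul]
    exact hC.symm
  have hN : (∑ x : ∀ j, X j, ({y | y ∈ E ∧ y i = a}).indicator
      (fun x => ∏ j, g j (x j)) x) = g i a * C := by
    rw [← Equiv.sum_comp e.symm, Fintype.sum_prod_type]
    have : ∀ b y, ({y | y ∈ E ∧ y i = a}).indicator (fun x => ∏ j, g j (x j)) (e.symm (b, y))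
        = (if b = a then (1:ℝ) else 0) * (g i a * (if e.symm (a, y) ∈ E then h y else 0)) := by
      intro b y
      rw [Set.indicator_apply]
      by_cases hb : b = a
      · subst hb
        by_cases hq : e.symm (b, y) ∈ E
        · rw [if_pos ⟨hq, hcoord b y⟩, if_pos rfl, one_mul, hprod, if_pos hq]
        · rw [if_neg (fun hc => hq hc.1), if_pos rfl, one_mul, if_neg hq, mul_zero]
      · rw [if_neg (fun hc => hb (by rw [← hcoord b y]; exact hc.2)), if_neg hb, zero_mul]
    simp_rw [this, ← Finset.mul_sum, ← Finset.sum_mul]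
    rw [Finset.sum_ite_eq' Finset.univ a (fun _ => (1:ℝ)), if_pos (Finset.mem_univ a), one_mul, hC]
  have hCpos : 0 < C := by
    obtain ⟨x, hx⟩ := hne
    have hx' : e.symm (a, (e x).2) ∈ E := by
      have : e.symm (a, (e x).2) = Function.update x i a := by
        rw [piSplitAt_symm_update i a ((e x).1) ((e x).2), Prod.mk.eta,
          Equiv.symm_apply_apply]
      rw [this]; exact hE x a hx
    have hhpos : ∀ y, 0 < h y := fun y => Finset.prod_pos (fun j _ => hg0 _ _)
    rw [hC]
    refine Finset.sum_pos' (fun y _ => ?_) ⟨(e x).2, Finset.mem_univ _, ?_⟩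
    · split <;> [exact (hhpos _).le; exact le_refl 0]
    · rw [if_pos hx']; exact hhpos _
  rw [condP, hD, hN, mul_div_assoc, div_self hCpos.ne', mul_one]

/-- If `T` is the `X`-compatible staged tree representing the full
independence model (at every depth the trivial partition with a single stage, i.e.
any two contexts are in the same stage), then `CID(T, S) = 0` for every permutation
`π` and every `X_π`-compatible staged tree `S`. -/
theorem cid_eq_zero_of_full_independence [∀ i, Nontrivial (X i)]
    (T : StagedTree p X 1) (hT : ∀ (i : Fin p) (x y : ∀ j, X j), T.stage i x y) :
    ∀ (π' : Equiv.Perm (Fin p)) (S : StagedTree p X π'), CID T S = 0 := by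
  intro π' S
  have key : ∀ (i : Fin p) (x : ∀ j, X j), ¬ WronglyInferred T S i x := by
    intro i x hW
    obtain ⟨P, ⟨θ, hθ, rfl⟩, a, w, hw, hne⟩ := hW
    have hXne : ∀ j, Nonempty (X j) := fun j => inferInstance
    have x0 : ∀ j, X j := fun j => Classical.arbitrary _
    set g : ∀ j : Fin p, X j → ℝ := fun j => θ j x0 with hg
    have hgeq : ∀ (j : Fin p) (y : ∀ k, X k), θ j y = g j :=
      fun j y => hθ.2.2 j y x0 (hT j y x0)
    have hjoint : joint θ = fun y => ∏ j, g j (y j) := by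
      funext y
      exact Finset.prod_congr rfl fun j _ => by rw [hgeq j y]
    have hg0 : ∀ j a, 0 < g j a := fun j a => hθ.1 j x0 a
    have hg1 : ∀ j, ∑ a, g j a = 1 := fun j => hθ.2.1 j x0
    have h1 : condP (joint θ) i a (ctxEvent i x) = g i a := by
      rw [hjoint]
      refine condP_const g hg0 hg1 i a _ ⟨x, fun j _ => rfl⟩ ?_
      intro y b hy j hj
      rw [Function.update_of_ne (ne_of_lt hj)]
      exact hy j hj
    have h2 : condP (joint θ) i a (stageEvent S i w) = g i a := by
      rw [hjoint]
      refine condP_const g hg0 hg1 i a _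
        ⟨w, w, (S.stage_equiv i).refl w, fun j _ _ => rfl⟩ ?_
      rintro y b ⟨z, hz, hza⟩
      refine ⟨z, hz, fun j h1' h2' => ?_⟩
      rw [Function.update_of_ne (ne_of_lt h2')]
      exact hza j h1' h2'
    exact hne (h1.trans h2.symm)
  unfold CID
  refine Finset.sum_eq_zero fun i _ => ?_
  have : IsEmpty {x : ∀ j, X j // WronglyInferred T S i x} :=
    ⟨fun ⟨x, hx⟩ => key i x hx⟩
  rw [Nat.card_of_isEmpty, Nat.cast_zero, zero_div]
end

section
/- Let T and S be two X-compatible staged trees with the same variable order X_1,…,X_p. If M_T ⊆ M_S, then the staging of T is coarser than the staging of S: for every i ∈ [p], any two contexts x_{[i−1]}, x'_{[i−1]} ∈ 𝕏_{[i−1]} lying in the same stage of S at depth i−1 also lie in the same stage of T at depth i−1. -/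
variable {p : ℕ} {X : Fin p → Type*} [∀ i, Fintype (X i)] [∀ i, DecidableEq (X i)]
  {π : Equiv.Perm (Fin p)}

section Aux

open Finset

private lemma loc_of_stage (T : StagedTree p X 1) {θ : ∀ i : Fin p, (∀ j, X j) → X i → ℝ}
    (hst : ∀ i x y, T.stage i x y → θ i x = θ i y) :
    ∀ (i : Fin p) (x y : ∀ j, X j), (∀ j, j < i → x j = y j) → θ i x = θ i y := by
  intro i x y hxy
  refine hst i x y (T.stage_local i x y ?_)
  intro j hj
  exact hxy j (by simpa [Equiv.Perm.one_symm] using hj)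

private lemma sum_joint_upper
    (θ : ∀ i : Fin p, (∀ j, X j) → X i → ℝ)
    (hsum : ∀ i x, ∑ a : X i, θ i x a = 1)
    (hloc : ∀ (i : Fin p) (x y : ∀ j, X j), (∀ j, j < i → x j = y j) → θ i x = θ i y) :
    ∀ F : Finset (Fin p), (∀ k ∈ F, ∀ l, k < l → l ∈ F) → ∀ x : ∀ j, X j,
      ∑ y ∈ Finset.univ.filter (fun y : ∀ j, X j => ∀ j ∉ F, y j = x j), joint θ y
        = ∏ k ∈ Fᶜ, θ k x (x k) := by
  classical
  intro F
  induction F using Finset.strongInduction with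
  | _ F ih =>
    intro hF x
    rcases F.eq_empty_or_nonempty with rfl | hne
    · have hs : Finset.univ.filter
          (fun y : ∀ j, X j => ∀ j ∉ (∅ : Finset (Fin p)), y j = x j) = {x} := by
        ext y
        simp [funext_iff]
      rw [hs, Finset.sum_singleton, Finset.compl_empty]
      rfl
    · set m := F.min' hne with hm
      have hmF : m ∈ F := F.min'_mem hne
      have hF' : ∀ k ∈ F.erase m, ∀ l, k < l → l ∈ F.erase m := by
        intro k hk l hkl
        have hkF := Finset.mem_of_mem_erase hk
        refine Finset.mem_erase.2 ⟨?_, hF k hkF l hkl⟩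
        intro hlm
        rw [hlm] at hkl
        exact absurd hkl (not_lt.2 (F.min'_le k hkF))
      have hmain : ∀ k, k ∉ F → ¬ m < k := by
        intro k hk hml
        exact hk (hF m hmF k hml)
      have hsplit : ∀ a : X m,
          (Finset.univ.filter (fun y : ∀ j, X j => ∀ j ∉ F, y j = x j)).filter
              (fun y => y m = a)
            = Finset.univ.filter
              (fun y : ∀ j, X j => ∀ j ∉ F.erase m, y j = Function.update x m a j) := by
        intro a
        ext y
        simp only [Finset.mem_filter, Finset.mem_univ, true_and]
        constructor
        · rintro ⟨h1, h2⟩ j hj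
          by_cases hjm : j = m
          · subst hjm; simp [h2]
          · have hjF : j ∉ F := by
              intro hjF'
              exact hj (Finset.mem_erase.2 ⟨hjm, hjF'⟩)
            rw [Function.update_of_ne hjm]
            exact h1 j hjF
        · intro h1
          have hym : y m = a := by
            have := h1 m (by simp)
            simpa using this
          refine ⟨?_, hym⟩
          intro j hj
          have hjm : j ≠ m := fun hjm => hj (hjm ▸ hmF)
          have := h1 j (by simp [hj, hjm])
          rwa [Function.update_of_ne hjm] at this
      have hcompl : (F.erase m)ᶜ = insert m Fᶜ := by
        ext k
        by_cases hkm : k = m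
        · simp [hkm, hmF]
        · simp [Finset.mem_erase, hkm]
      calc
        ∑ y ∈ Finset.univ.filter (fun y : ∀ j, X j => ∀ j ∉ F, y j = x j), joint θ y
            = ∑ a : X m, ∑ y ∈ (Finset.univ.filter
                (fun y : ∀ j, X j => ∀ j ∉ F, y j = x j)).filter (fun y => y m = a),
                joint θ y := (Finset.sum_fiberwise _ _ _).symm
        _ = ∑ a : X m, θ m x a * ∏ k ∈ Fᶜ, θ k x (x k) := by
            refine Finset.sum_congr rfl (fun a _ => ?_)
            rw [hsplit a, ih (F.erase m) (Finset.erase_ssubset hmF) hF'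
              (Function.update x m a), hcompl,
              Finset.prod_insert (by simp [hmF])]
            congr 1
            · have h1 : θ m (Function.update x m a) = θ m x := by
                refine hloc m _ x (fun j hj => ?_)
                exact Function.update_of_ne (ne_of_lt hj) _ _
              rw [h1, Function.update_self]
            · refine Finset.prod_congr rfl (fun k hk => ?_)
              have hkF : k ∉ F := by simpa using hk
              have hkm : k ≠ m := fun hkm => hkF (hkm ▸ hmF)
              have h1 : θ k (Function.update x m a) = θ k x := by
                refine hloc k _ x (fun j hj => ?_)
                refine Function.update_of_ne (fun hjm => ?_) _ _
                exact hmain k hkF (hjm ▸ hj)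
              rw [h1, Function.update_of_ne hkm]
        _ = ∏ k ∈ Fᶜ, θ k x (x k) := by
            rw [← Finset.sum_mul, hsum, one_mul]

private lemma marg_eq
    (θ : ∀ i : Fin p, (∀ j, X j) → X i → ℝ)
    (hsum : ∀ i x, ∑ a : X i, θ i x a = 1)
    (hloc : ∀ (i : Fin p) (x y : ∀ j, X j), (∀ j, j < i → x j = y j) → θ i x = θ i y)
    (i : Fin p) (x : ∀ j, X j) (a : X i) :
    ∑ y ∈ Finset.univ.filter
        (fun y : ∀ j, X j => ∀ j ∉ Finset.univ.filter (fun k => i < k),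
          y j = Function.update x i a j), joint θ y
      = θ i x a * ∏ k ∈ Finset.univ.filter (fun k => k < i), θ k x (x k) := by
  classical
  have hupper : ∀ k ∈ Finset.univ.filter (fun k : Fin p => i < k),
      ∀ l, k < l → l ∈ Finset.univ.filter (fun k : Fin p => i < k) := by
    intro k hk l hkl
    simp only [Finset.mem_filter, Finset.mem_univ, true_and] at *
    exact lt_trans hk hkl
  rw [sum_joint_upper θ hsum hloc (Finset.univ.filter (fun k => i < k)) hupper
    (Function.update x i a)]
  have hc : (Finset.univ.filter (fun k : Fin p => i < k))ᶜ
      = insert i (Finset.univ.filter (fun k => k < i)) := by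
    ext k
    simp [not_lt, le_iff_lt_or_eq, or_comm, eq_comm]
  rw [hc, Finset.prod_insert (by simp)]
  congr 1
  · have h1 : θ i (Function.update x i a) = θ i x :=
      hloc i _ x (fun j hj => Function.update_of_ne (ne_of_lt hj) _ _)
    rw [h1, Function.update_self]
  · refine Finset.prod_congr rfl (fun k hk => ?_)
    have hki : k < i := by simpa using hk
    have h1 : θ k (Function.update x i a) = θ k x :=
      hloc k _ x (fun j hj => Function.update_of_ne (ne_of_lt (lt_trans hj hki)) _ _)
    rw [h1, Function.update_of_ne (ne_of_lt hki)]

private lemma param_eq_of_joint_eq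
    {θ η : ∀ i : Fin p, (∀ j, X j) → X i → ℝ}
    (hθp : ∀ i x a, 0 < θ i x a) (hθs : ∀ i x, ∑ a : X i, θ i x a = 1)
    (hθl : ∀ (i : Fin p) (x y : ∀ j, X j), (∀ j, j < i → x j = y j) → θ i x = θ i y)
    (hηp : ∀ i x a, 0 < η i x a) (hηs : ∀ i x, ∑ a : X i, η i x a = 1)
    (hηl : ∀ (i : Fin p) (x y : ∀ j, X j), (∀ j, j < i → x j = y j) → η i x = η i y)
    (hje : joint θ = joint η) : ∀ (i : Fin p) (x : ∀ j, X j), θ i x = η i x := by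
  classical
  intro i x
  have key : ∀ a : X i,
      θ i x a * ∏ k ∈ Finset.univ.filter (fun k => k < i), θ k x (x k)
        = η i x a * ∏ k ∈ Finset.univ.filter (fun k => k < i), η k x (x k) := by
    intro a
    rw [← marg_eq θ hθs hθl i x a, ← marg_eq η hηs hηl i x a, hje]
  have hsum : (∏ k ∈ Finset.univ.filter (fun k => k < i), θ k x (x k))
      = ∏ k ∈ Finset.univ.filter (fun k => k < i), η k x (x k) := by
    have := Finset.sum_congr rfl (fun a (_ : a ∈ (Finset.univ : Finset (X i))) => key a)
    rwa [← Finset.sum_mul, ← Finset.sum_mul, hθs, hηs, one_mul, one_mul] at this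
  have hpos : (0:ℝ) < ∏ k ∈ Finset.univ.filter (fun k => k < i), θ k x (x k) :=
    Finset.prod_pos (fun k _ => hθp k x (x k))
  funext a
  have := key a
  rw [← hsum] at this
  exact mul_right_cancel₀ (ne_of_gt hpos) this

end Aux

/-- If `T` and `S` are `X`-compatible staged trees in the same
variable order and `M_T ⊆ M_S`, then the staging of `T` is coarser than the staging
of `S`: any two contexts in the same stage of `S` at depth `i-1` are also in the
same stage of `T` at depth `i-1`. -/
theorem stage_coarser_of_model_subset [∀ i, Nontrivial (X i)]
    (T S : StagedTree p X 1) (h : Model T ⊆ Model S) :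
    ∀ (i : Fin p) (x y : ∀ j, X j), S.stage i x y → T.stage i x y := by
  classical
  intro i x y hS
  by_contra hT
  -- two distinct strictly positive distributions on each `X k`
  have hcard : ∀ k : Fin p, (0:ℝ) < (Fintype.card (X k) : ℝ) := by
    intro k
    exact_mod_cast Fintype.card_pos
  set u : ∀ k : Fin p, X k → ℝ := fun k _ => 1 / (Fintype.card (X k) : ℝ) with hu
  set d : ∀ k : Fin p, X k → ℝ := fun k c =>
    (if c = Classical.arbitrary (X k) then 2 else 1) / ((Fintype.card (X k) : ℝ) + 1)
    with hd
  have hupos : ∀ k c, 0 < u k c := fun k c => by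
    simp only [hu]
    positivity
  have hdpos : ∀ k c, 0 < d k c := by
    intro k c
    simp only [hd]
    split <;> positivity
  have husum : ∀ k : Fin p, ∑ c : X k, u k c = 1 := by
    intro k
    simp only [hu]
    rw [Finset.sum_const, Finset.card_univ, nsmul_eq_mul]
    field_simp
  have hdsum : ∀ k : Fin p, ∑ c : X k, d k c = 1 := by
    intro k
    simp only [hd]
    rw [← Finset.sum_div]
    have : ∑ c : X k, (if c = Classical.arbitrary (X k) then (2:ℝ) else 1)
        = (Fintype.card (X k) : ℝ) + 1 := by
      have h1 : ∀ c : X k, (if c = Classical.arbitrary (X k) then (2:ℝ) else 1)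
          = 1 + (if c = Classical.arbitrary (X k) then (1:ℝ) else 0) := by
        intro c; split <;> norm_num
      rw [Finset.sum_congr rfl (fun c _ => h1 c), Finset.sum_add_distrib,
        Finset.sum_const, Finset.card_univ, Finset.sum_ite_eq' Finset.univ]
      simp [add_comm]
    rw [this]
    field_simp
  -- the separating parameter for `T`
  set θ : ∀ k : Fin p, (∀ j, X j) → X k → ℝ :=
    fun k z => if T.stage k z x then u k else d k with hθ
  have hθpos : ∀ k z c, 0 < θ k z c := by
    intro k z c
    simp only [hθ]
    split
    · exact hupos k c
    · exact hdpos k c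
  have hθsum : ∀ k z, ∑ c : X k, θ k z c = 1 := by
    intro k z
    simp only [hθ]
    split
    · exact husum k
    · exact hdsum k
  have hθstage : ∀ k z w, T.stage k z w → θ k z = θ k w := by
    intro k z w hzw
    simp only [hθ]
    have : T.stage k z x ↔ T.stage k w x :=
      ⟨fun hc => (T.stage_equiv k).trans ((T.stage_equiv k).symm hzw) hc,
       fun hc => (T.stage_equiv k).trans hzw hc⟩
    by_cases hz : T.stage k z x
    · rw [if_pos hz, if_pos (this.1 hz)]
    · rw [if_neg hz, if_neg (fun hc => hz (this.2 hc))]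
  have hθparam : IsParam T θ := ⟨hθpos, hθsum, hθstage⟩
  have hMT : joint θ ∈ Model T := ⟨θ, hθparam, rfl⟩
  obtain ⟨η, hηparam, hje⟩ := h hMT
  have heq := param_eq_of_joint_eq hθpos hθsum (loc_of_stage T hθstage)
    hηparam.1 hηparam.2.1 (loc_of_stage S hηparam.2.2) hje
  have h4 : θ i x = θ i y := by
    rw [heq i x, heq i y]
    exact hηparam.2.2 i x y hS
  have hxx : θ i x = u i := by
    simp only [hθ]
    rw [if_pos ((T.stage_equiv i).refl x)]
  have hyy : θ i y = d i := by
    have hn : ¬ T.stage i y x := fun hc => hT ((T.stage_equiv i).symm hc)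
    simp only [hθ]
    rw [if_neg hn]
  obtain ⟨b, hb⟩ := exists_ne (Classical.arbitrary (X i))
  have hub : u i b = d i b := by
    rw [← hxx, ← hyy, h4]
  simp only [hu, hd, if_neg hb] at hub
  have hc := hcard i
  rw [div_eq_div_iff (by positivity) (by positivity)] at hub
  linarith
end

section
/- Let T be an X-compatible staged tree, i ∈ [p], and let x_{[i−1]}, x'_{[i−1]} ∈ 𝕏_{[i−1]} be two contexts. Then P(X_i = · | X_{[i−1]} = x_{[i−1]}) = P(X_i = · | X_{[i−1]} = x'_{[i−1]}) holds for every P ∈ M_T if and only if x_{[i−1]} and x'_{[i−1]} lie in the same stage of T at depth i−1. In particular, if the two contexts lie in different stages of T, there exists θ ∈ Θ_T with P_θ(X_i = · | X_{[i−1]} = x_{[i−1]}) ≠ P_θ(X_i = · | X_{[i−1]} = x'_{[i−1]}). -/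
variable {p : ℕ} {X : Fin p → Type*} [∀ i, Fintype (X i)] [∀ i, DecidableEq (X i)]
  {π : Equiv.Perm (Fin p)}

section AuxProof

private lemma tail_sum_base (θ : ∀ i : Fin p, (∀ j, X j) → X i → ℝ)
    (k : ℕ) (hpk : p ≤ k) (b : ∀ j, X j) :
    ∑ y : ∀ j, X j,
      (if ∀ j : Fin p, (j : ℕ) < k → y j = b j then
        ∏ j ∈ Finset.univ.filter (fun j : Fin p => k ≤ (j : ℕ)), θ j y (y j) else 0) = 1 := by
  have hfil : Finset.univ.filter (fun j : Fin p => k ≤ (j : ℕ)) = (∅ : Finset (Fin p)) := by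
    ext j
    simp only [Finset.mem_filter, Finset.mem_univ, true_and, Finset.notMem_empty, iff_false,
      not_le]
    exact lt_of_lt_of_le j.isLt hpk
  have hpt : ∀ y : ∀ j, X j,
      (if ∀ j : Fin p, (j : ℕ) < k → y j = b j then
        ∏ j ∈ Finset.univ.filter (fun j : Fin p => k ≤ (j : ℕ)), θ j y (y j) else 0)
      = if y = b then (1 : ℝ) else 0 := by
    intro y
    rw [hfil, Finset.prod_empty]
    refine if_congr ⟨fun h => funext fun j => h j (lt_of_lt_of_le j.isLt hpk),
      fun h j _ => by rw [h]⟩ rfl rfl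
  rw [Finset.sum_congr rfl fun y _ => hpt y]
  simp

private lemma tail_sum (θ : ∀ i : Fin p, (∀ j, X j) → X i → ℝ)
    (hsum : ∀ i x, ∑ a : X i, θ i x a = 1)
    (hloc : ∀ (j : Fin p) (y z : ∀ j, X j), (∀ j' : Fin p, j' < j → y j' = z j') → θ j y = θ j z) :
    ∀ (n k : ℕ), p - k ≤ n → ∀ b : ∀ j, X j,
      ∑ y : ∀ j, X j, (if ∀ j : Fin p, (j : ℕ) < k → y j = b j then
        ∏ j ∈ Finset.univ.filter (fun j : Fin p => k ≤ (j : ℕ)), θ j y (y j) else 0) = 1 := by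
  intro n
  induction n with
  | zero => exact fun k hk b => tail_sum_base θ k (by omega) b
  | succ n ih =>
    intro k hk b
    by_cases hpk : p ≤ k
    · exact tail_sum_base θ k hpk b
    push_neg at hpk
    set K : Fin p := ⟨k, hpk⟩ with hKdef
    have hKval : (K : ℕ) = k := rfl
    have hfil : Finset.univ.filter (fun j : Fin p => k ≤ (j : ℕ))
        = insert K (Finset.univ.filter (fun j : Fin p => k + 1 ≤ (j : ℕ))) := by
      ext j
      simp only [Finset.mem_filter, Finset.mem_univ, true_and, Finset.mem_insert, Fin.ext_iff,
        hKval]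
      omega
    have hKnot : K ∉ Finset.univ.filter (fun j : Fin p => k + 1 ≤ (j : ℕ)) := by
      simp [hKval]
    have hequiv : ∀ (a : X K) (y : ∀ j, X j),
        (y K = a ∧ ∀ j : Fin p, (j : ℕ) < k → y j = b j) ↔
          (∀ j : Fin p, (j : ℕ) < k + 1 → y j = Function.update b K a j) := by
      intro a y
      constructor
      · rintro ⟨h1, h2⟩ j hj
        by_cases hjK : j = K
        · subst hjK; rw [Function.update_self]; exact h1
        · rw [Function.update_of_ne hjK]
          exact h2 j (by simp only [Fin.ext_iff, hKval] at hjK; omega)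
      · intro h
        refine ⟨?_, fun j hj => ?_⟩
        · have := h K (by omega)
          rwa [Function.update_self] at this
        · have := h j (by omega)
          rwa [Function.update_of_ne (fun hjK => by rw [hjK, hKval] at hj; omega)] at this
    have key : ∀ (a : X K) (y : ∀ j, X j),
        (if y K = a then
          (if ∀ j : Fin p, (j : ℕ) < k → y j = b j then
            ∏ j ∈ Finset.univ.filter (fun j : Fin p => k ≤ (j : ℕ)), θ j y (y j) else 0) else 0)
        = θ K (Function.update b K a) a *
          (if ∀ j : Fin p, (j : ℕ) < k + 1 → y j = Function.update b K a j then
            ∏ j ∈ Finset.univ.filter (fun j : Fin p => k + 1 ≤ (j : ℕ)), θ j y (y j) else 0) := by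
      intro a y
      by_cases hC : ∀ j : Fin p, (j : ℕ) < k + 1 → y j = Function.update b K a j
      · obtain ⟨h1, h2⟩ := (hequiv a y).mpr hC
        rw [if_pos h1, if_pos h2, if_pos hC, hfil, Finset.prod_insert hKnot, h1,
          hloc K y (Function.update b K a) (fun j' hj' => by
            have hj'k : (j' : ℕ) < k := hj'
            rw [h2 j' hj'k,
              Function.update_of_ne (fun hjK => by rw [hjK, hKval] at hj'k; omega)])]
      · rw [if_neg hC, mul_zero]
        by_cases h1 : y K = a
        · by_cases h2 : ∀ j : Fin p, (j : ℕ) < k → y j = b j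
          · exact absurd ((hequiv a y).mp ⟨h1, h2⟩) hC
          · rw [if_pos h1, if_neg h2]
        · rw [if_neg h1]
    calc
      ∑ y : ∀ j, X j, (if ∀ j : Fin p, (j : ℕ) < k → y j = b j then
          ∏ j ∈ Finset.univ.filter (fun j : Fin p => k ≤ (j : ℕ)), θ j y (y j) else 0)
        = ∑ y : ∀ j, X j, ∑ a : X K,
            (if y K = a then (if ∀ j : Fin p, (j : ℕ) < k → y j = b j then
              ∏ j ∈ Finset.univ.filter (fun j : Fin p => k ≤ (j : ℕ)), θ j y (y j) else 0)
              else 0) := by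
          refine Finset.sum_congr rfl fun y _ => ?_
          rw [Finset.sum_ite_eq, if_pos (Finset.mem_univ _)]
      _ = ∑ a : X K, ∑ y : ∀ j, X j,
            (if y K = a then (if ∀ j : Fin p, (j : ℕ) < k → y j = b j then
              ∏ j ∈ Finset.univ.filter (fun j : Fin p => k ≤ (j : ℕ)), θ j y (y j) else 0)
              else 0) := Finset.sum_comm
      _ = ∑ a : X K, θ K (Function.update b K a) a *
            ∑ y : ∀ j, X j, (if ∀ j : Fin p, (j : ℕ) < k + 1 → y j = Function.update b K a j then
              ∏ j ∈ Finset.univ.filter (fun j : Fin p => k + 1 ≤ (j : ℕ)), θ j y (y j) else 0) := by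
          refine Finset.sum_congr rfl fun a _ => ?_
          rw [Finset.sum_congr rfl fun y _ => key a y, ← Finset.mul_sum]
      _ = ∑ a : X K, θ K b a := by
          refine Finset.sum_congr rfl fun a _ => ?_
          rw [ih (k + 1) (by omega) (Function.update b K a), mul_one,
            hloc K (Function.update b K a) b (fun j' hj' =>
              Function.update_of_ne (ne_of_lt hj') a b)]
      _ = 1 := hsum K b

private lemma condP_joint (T : StagedTree p X 1) (θ : ∀ i : Fin p, (∀ j, X j) → X i → ℝ)
    (hθ : IsParam T θ) (i : Fin p) (x : ∀ j, X j) (a : X i) :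
    condP (joint θ) i a (ctxEvent i x) = θ i x a := by
  classical
  obtain ⟨hpos, hsum, hstage⟩ := hθ
  have hloc : ∀ (j : Fin p) (y z : ∀ j, X j),
      (∀ j' : Fin p, j' < j → y j' = z j') → θ j y = θ j z :=
    fun j y z h => hstage j y z (T.stage_local j y z (fun j' hj' => h j' hj'))
  set D : ℝ := ∏ j ∈ Finset.univ.filter (fun j : Fin p => (j : ℕ) < (i : ℕ)), θ j x (x j)
    with hD
  have hDpos : 0 < D := Finset.prod_pos fun j _ => hpos j x (x j)
  have hcompl : Finset.univ.filter (fun j : Fin p => ¬ (j : ℕ) < (i : ℕ))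
      = Finset.univ.filter (fun j : Fin p => (i : ℕ) ≤ (j : ℕ)) := by
    ext j
    simp only [Finset.mem_filter, Finset.mem_univ, true_and, not_lt]
  have hden : (∑ y : ∀ j, X j, (ctxEvent i x).indicator (joint θ) y) = D := by
    have step : ∀ y : ∀ j, X j, (ctxEvent i x).indicator (joint θ) y
        = D * (if ∀ j : Fin p, (j : ℕ) < (i : ℕ) → y j = x j then
            ∏ j ∈ Finset.univ.filter (fun j : Fin p => (i : ℕ) ≤ (j : ℕ)), θ j y (y j) else 0) := by
      intro y
      rw [Set.indicator_apply]
      by_cases hC : ∀ j : Fin p, (j : ℕ) < (i : ℕ) → y j = x j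
      · rw [if_pos hC, if_pos (show y ∈ ctxEvent i x from fun j hj => hC j hj)]
        show (∏ j : Fin p, θ j y (y j)) = _
        rw [← Finset.prod_filter_mul_prod_filter_not Finset.univ
          (fun j : Fin p => (j : ℕ) < (i : ℕ)), hcompl]
        congr 1
        rw [hD]
        refine Finset.prod_congr rfl fun j hj => ?_
        have hj' : (j : ℕ) < (i : ℕ) := (Finset.mem_filter.mp hj).2
        rw [hloc j y x (fun j'' hj'' => hC j'' (lt_trans hj'' hj')), hC j hj']
      · rw [if_neg hC, if_neg (fun h : y ∈ ctxEvent i x => hC fun j hj => h j hj), mul_zero]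
    rw [Finset.sum_congr rfl fun y _ => step y, ← Finset.mul_sum,
      tail_sum θ hsum hloc p (i : ℕ) (by omega) x, mul_one]
  have hnum : (∑ y : ∀ j, X j,
        ({y | y ∈ ctxEvent i x ∧ y i = a}).indicator (joint θ) y) = D * θ i x a := by
    set b' : ∀ j, X j := Function.update x i a with hb'
    have hib' : b' i = a := Function.update_self i a x
    have hjb' : ∀ j : Fin p, j ≠ i → b' j = x j := fun j hj => Function.update_of_ne hj a x
    have hiinsert : Finset.univ.filter (fun j : Fin p => (j : ℕ) < (i : ℕ) + 1)
        = insert i (Finset.univ.filter (fun j : Fin p => (j : ℕ) < (i : ℕ))) := by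
      ext j
      simp only [Finset.mem_filter, Finset.mem_univ, true_and, Finset.mem_insert, Fin.ext_iff]
      omega
    have hinot : i ∉ Finset.univ.filter (fun j : Fin p => (j : ℕ) < (i : ℕ)) := by simp
    have step : ∀ y : ∀ j, X j, ({y | y ∈ ctxEvent i x ∧ y i = a}).indicator (joint θ) y
        = (D * θ i x a) * (if ∀ j : Fin p, (j : ℕ) < (i : ℕ) + 1 → y j = b' j then
            ∏ j ∈ Finset.univ.filter (fun j : Fin p => (i : ℕ) + 1 ≤ (j : ℕ)), θ j y (y j)
          else 0) := by
      intro y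
      rw [Set.indicator_apply]
      by_cases hC : ∀ j : Fin p, (j : ℕ) < (i : ℕ) + 1 → y j = b' j
      · have hyi : y i = a := by rw [hC i (by omega), hib']
        have hyx : ∀ j : Fin p, (j : ℕ) < (i : ℕ) → y j = x j := fun j hj => by
          rw [hC j (by omega), hjb' j (fun hji => by rw [hji] at hj; omega)]
        have hmem : y ∈ {y | y ∈ ctxEvent i x ∧ y i = a} := ⟨fun j hj => hyx j hj, hyi⟩
        rw [if_pos hC, if_pos hmem]
        show (∏ j : Fin p, θ j y (y j)) = _
        rw [← Finset.prod_filter_mul_prod_filter_not Finset.univ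
          (fun j : Fin p => (j : ℕ) < (i : ℕ) + 1)]
        have hcompl' : Finset.univ.filter (fun j : Fin p => ¬ (j : ℕ) < (i : ℕ) + 1)
            = Finset.univ.filter (fun j : Fin p => (i : ℕ) + 1 ≤ (j : ℕ)) := by
          ext j
          simp only [Finset.mem_filter, Finset.mem_univ, true_and, not_lt]
        rw [hcompl']
        congr 1
        rw [hiinsert, Finset.prod_insert hinot, mul_comm D (θ i x a)]
        congr 1
        · rw [hyi, hloc i y x (fun j' hj' => hyx j' hj')]
        · rw [hD]
          refine Finset.prod_congr rfl fun j hj => ?_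
          have hj' : (j : ℕ) < (i : ℕ) := (Finset.mem_filter.mp hj).2
          rw [hloc j y x (fun j'' hj'' => hyx j'' (lt_trans hj'' hj')), hyx j hj']
      · have hnm : y ∉ {y | y ∈ ctxEvent i x ∧ y i = a} := by
          rintro ⟨h1, h2⟩
          refine hC fun j hj => ?_
          by_cases hji : j = i
          · rw [hji, h2, hib']
          · rw [h1 j (show j < i by
                simp only [Fin.ext_iff] at hji
                exact Fin.lt_def.mpr (by omega)), hjb' j hji]
        rw [if_neg hC, if_neg hnm, mul_zero]
    rw [Finset.sum_congr rfl fun y _ => step y, ← Finset.mul_sum,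
      tail_sum θ hsum hloc p ((i : ℕ) + 1) (by omega) b', mul_one]
  rw [condP, hnum, hden, mul_comm, mul_div_assoc, div_self (ne_of_gt hDpos), mul_one]

private lemma exists_param_ne [∀ i, Nontrivial (X i)] (T : StagedTree p X 1) (i : Fin p)
    (x x' : ∀ j, X j) (hst : ¬ T.stage i x x') :
    ∃ θ, IsParam T θ ∧ ∃ a : X i, θ i x a ≠ θ i x' a := by
  classical
  obtain ⟨a0, b0, hab⟩ := exists_pair_ne (X i)
  set n : ℝ := (Fintype.card (X i) : ℝ) with hn
  have hn2 : (2 : ℝ) ≤ n := by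
    rw [hn]
    exact_mod_cast Fintype.one_lt_card
  have hnpos : (0 : ℝ) < n := by linarith
  set ε : ℝ := (2 * n)⁻¹ with hε
  have hεpos : 0 < ε := by rw [hε]; positivity
  have h2ε : n⁻¹ = 2 * ε := by rw [hε]; field_simp
  have hinv : ε < n⁻¹ := by rw [h2ε]; linarith
  have hninv : 0 < n⁻¹ := inv_pos.mpr hnpos
  set d : X i → ℝ :=
    fun c => n⁻¹ + ((if c = a0 then ε else 0) - (if c = b0 then ε else 0)) with hd
  have hdpos : ∀ c, 0 < d c := by
    intro c
    rw [hd]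
    dsimp only
    split_ifs <;> linarith
  have hdsum : ∑ c : X i, d c = 1 := by
    rw [hd]
    simp only [Finset.sum_add_distrib, Finset.sum_sub_distrib, Finset.sum_ite_eq',
      Finset.mem_univ, if_true, Finset.sum_const, nsmul_eq_mul]
    rw [Finset.card_univ, ← hn, sub_self, add_zero, mul_inv_cancel₀ (ne_of_gt hnpos)]
  refine ⟨fun j y aa => if h : j = i ∧ T.stage i y x then d (h.1 ▸ aa)
      else (Fintype.card (X j) : ℝ)⁻¹, ⟨?_, ?_, ?_⟩, a0, ?_⟩
  · intro j y aa
    dsimp only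
    split_ifs with h
    · exact hdpos _
    · exact inv_pos.mpr (by exact_mod_cast Fintype.card_pos)
  · intro j y
    dsimp only
    by_cases hj : j = i
    · subst hj
      by_cases hs : T.stage j y x
      · have hpt : ∀ aa : X j,
            (if h : j = j ∧ T.stage j y x then d (h.1 ▸ aa)
              else (Fintype.card (X j) : ℝ)⁻¹) = d aa :=
          fun aa => by rw [dif_pos ⟨rfl, hs⟩]
        rw [Finset.sum_congr rfl fun aa _ => hpt aa]
        exact hdsum
      · have hpt : ∀ aa : X j,
            (if h : j = j ∧ T.stage j y x then d (h.1 ▸ aa)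
              else (Fintype.card (X j) : ℝ)⁻¹) = (Fintype.card (X j) : ℝ)⁻¹ :=
          fun aa => dif_neg (fun h => hs h.2)
        rw [Finset.sum_congr rfl fun aa _ => hpt aa, Finset.sum_const, Finset.card_univ,
          nsmul_eq_mul,
          mul_inv_cancel₀ (by exact_mod_cast Fintype.card_pos.ne' : (Fintype.card (X j) : ℝ) ≠ 0)]
    · have hpt : ∀ aa : X j,
          (if h : j = i ∧ T.stage i y x then d (h.1 ▸ aa)
            else (Fintype.card (X j) : ℝ)⁻¹) = (Fintype.card (X j) : ℝ)⁻¹ :=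
        fun aa => dif_neg (fun h => hj h.1)
      rw [Finset.sum_congr rfl fun aa _ => hpt aa, Finset.sum_const, Finset.card_univ,
        nsmul_eq_mul,
        mul_inv_cancel₀ (by exact_mod_cast Fintype.card_pos.ne' : (Fintype.card (X j) : ℝ) ≠ 0)]
  · intro j y z hyz
    by_cases hj : j = i
    · subst hj
      have hiff : T.stage j y x ↔ T.stage j z x :=
        ⟨fun h => (T.stage_equiv j).trans ((T.stage_equiv j).symm hyz) h,
         fun h => (T.stage_equiv j).trans hyz h⟩
      funext aa
      dsimp only
      by_cases hs : T.stage j y x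
      · rw [dif_pos ⟨rfl, hs⟩, dif_pos ⟨rfl, hiff.mp hs⟩]
      · rw [dif_neg (fun h : j = j ∧ T.stage j y x => hs h.2),
          dif_neg (fun h : j = j ∧ T.stage j z x => hs (hiff.mpr h.2))]
    · funext aa
      dsimp only
      rw [dif_neg (fun h : j = i ∧ T.stage i y x => hj h.1),
        dif_neg (fun h : j = i ∧ T.stage i z x => hj h.1)]
  · dsimp only
    have hxx : T.stage i x x := (T.stage_equiv i).refl x
    have hx' : ¬ T.stage i x' x := fun h => hst ((T.stage_equiv i).symm h)
    rw [dif_pos ⟨rfl, hxx⟩, dif_neg (fun h : i = i ∧ T.stage i x' x => hx' h.2)]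
    show d a0 ≠ n⁻¹
    rw [hd]
    dsimp only
    rw [if_pos rfl, if_neg hab]
    intro hcontra
    have : ε = 0 := by linarith
    exact absurd this (ne_of_gt hεpos)

end AuxProof

/-- For an `X`-compatible staged tree `T`, `i ∈ [p]` and two contexts
`x_{[i-1]}, x'_{[i-1]}`: the conditional distributions `P(X_i = · | X_{[i-1]} = x_{[i-1]})`
and `P(X_i = · | X_{[i-1]} = x'_{[i-1]})` coincide for every `P ∈ M_T` iff the two
contexts lie in the same stage of `T` at depth `i-1`.  In particular, if they lie in
different stages there is `θ ∈ Θ_T` whose conditional distributions differ. -/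
theorem cond_eq_forall_iff_same_stage [∀ i, Nontrivial (X i)]
    (T : StagedTree p X 1) (i : Fin p) (x x' : ∀ j, X j) :
    ((∀ P ∈ Model T, ∀ a : X i,
        condP P i a (ctxEvent i x) = condP P i a (ctxEvent i x')) ↔ T.stage i x x') ∧
    (¬ T.stage i x x' → ∃ θ, IsParam T θ ∧ ∃ a : X i,
        condP (joint θ) i a (ctxEvent i x) ≠ condP (joint θ) i a (ctxEvent i x')) := by
  constructor
  · constructor
    · intro hall
      by_contra hstage
      obtain ⟨θ, hθ, a, hne⟩ := exists_param_ne T i x x' hstage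
      have h1 := hall (joint θ) ⟨θ, hθ, rfl⟩ a
      rw [condP_joint T θ hθ i x a, condP_joint T θ hθ i x' a] at h1
      exact hne h1
    · intro hstage P hP a
      obtain ⟨θ, hθ, rfl⟩ := hP
      rw [condP_joint T θ hθ i x a, condP_joint T θ hθ i x' a]
      exact congrFun (hθ.2.2 i x x' hstage) a
  · intro hstage
    obtain ⟨θ, hθ, a, hne⟩ := exists_param_ne T i x x' hstage
    exact ⟨θ, hθ, a, by
      rw [condP_joint T θ hθ i x a, condP_joint T θ hθ i x' a]
      exact hne⟩
end

section
/- (Correctness of the CID algorithm.) Let T be an X-compatible staged tree, S an X_π-compatible staged tree, i ∈ [p], and x_{[i−1]} ∈ 𝕏_{[i−1]}. Let K = {j ≠ i : X_j precedes X_i in S's order} and I = K ∩ [i−1]. For an S-stage A (a stage of S at the depth of X_i in S, viewed as a set of contexts over the coordinates K), let B_A = {y_{[i−1]} ∈ 𝕏_{[i−1]} : y_I = z_I for some z ∈ A}. Then the interventional distribution P(X_i | do(X_{[i−1]} = x_{[i−1]})) is wrongly inferred by S with respect to T if and only if there exists an S-stage A with x_{[i−1]} ∈ B_A such that B_A contains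 two contexts lying in different stages of T at depth i−1. Consequently, the algorithm that counts, for each i, the proportion of contexts x_{[i−1]} satisfying this condition and sums over i outputs exactly CID(T, S). -/
variable {p : ℕ} {X : Fin p → Type*} [∀ i, Fintype (X i)] [∀ i, DecidableEq (X i)]
  {π : Equiv.Perm (Fin p)}

/-- The condition checked by the CID algorithm for variable `i` and context `x`:
there is an `S`-stage `A` (the stage of some representative `w` at the depth of
variable `i` in `S`) with `x_{[i-1]} ∈ B_A` such that `B_A` contains two contexts
lying in different stages of `T` at depth `i-1`.  Here `B_A` is exactly the event
`stageEvent S i w = {y : y_I = z_I for some z ∈ A}`. -/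
def AlgWrong (T : StagedTree p X 1) (S : StagedTree p X π) (i : Fin p)
    (x : ∀ j, X j) : Prop :=
  ∃ w : ∀ j, X j, x ∈ stageEvent S i w ∧
    ∃ y ∈ stageEvent S i w, ∃ y' ∈ stageEvent S i w, ¬ T.stage i y y'

-- ===== auxiliary development =====
open Finset

lemma T_stage_of_agree (T : StagedTree p X 1) (i : Fin p) (x y : ∀ j, X j)
    (h : ∀ j : Fin p, j < i → x j = y j) : T.stage i x y :=
  T.stage_local i x y (fun j hj => h j hj)

lemma theta_agree {T : StagedTree p X 1} {θ} (hθ : IsParam T θ) (i : Fin p)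
    {x y : ∀ j, X j} (h : ∀ j : Fin p, j < i → x j = y j) : θ i x = θ i y :=
  hθ.2.2 i x y (T_stage_of_agree T i x y h)

lemma prod_update_theta {T : StagedTree p X 1} {θ} (hθ : IsParam T θ)
    (κ : Fin p) (c : ∀ j, X j) (a : X κ) :
    ∏ j ∈ univ.filter (fun j : Fin p => (j : ℕ) < (κ : ℕ) + 1),
        θ j (Function.update c κ a) (Function.update c κ a j)
      = (∏ j ∈ univ.filter (fun j : Fin p => (j : ℕ) < (κ : ℕ)), θ j c (c j)) * θ κ c a := by
  have hset : univ.filter (fun j : Fin p => (j : ℕ) < (κ : ℕ) + 1)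
      = insert κ (univ.filter (fun j : Fin p => (j : ℕ) < (κ : ℕ))) := by
    ext j
    simp only [mem_filter, mem_univ, true_and, mem_insert, Nat.lt_succ_iff_lt_or_eq]
    constructor
    · rintro (h | h)
      · exact Or.inr h
      · exact Or.inl (Fin.ext h)
    · rintro (rfl | h)
      · exact Or.inr rfl
      · exact Or.inl h
  rw [hset, Finset.prod_insert (by simp)]
  have h1 : θ κ (Function.update c κ a) = θ κ c :=
    theta_agree hθ κ (fun j hj => Function.update_of_ne (Fin.ne_of_lt hj) _ _)
  have h2 : ∀ j ∈ univ.filter (fun j : Fin p => (j : ℕ) < (κ : ℕ)),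
      θ j (Function.update c κ a) (Function.update c κ a j) = θ j c (c j) := by
    intro j hj
    simp only [mem_filter, mem_univ, true_and] at hj
    have hne : j ≠ κ := fun h => by subst h; exact lt_irrefl _ hj
    rw [Function.update_of_ne hne,
      theta_agree hθ j (fun m hm => Function.update_of_ne (fun h => by
        subst h; exact absurd (lt_trans hm (Fin.mk_lt_mk.mp (by exact hj) : _)) (lt_irrefl _)) _ _)]
  rw [Function.update_self, h1, Finset.prod_congr rfl h2, mul_comm]

lemma sum_tail {T : StagedTree p X 1} {θ} (hθ : IsParam T θ) (m : ℕ) :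
    ∀ k : ℕ, m + k = p → ∀ x : ∀ j, X j,
      ∑ y ∈ univ.filter (fun y : ∀ j, X j => ∀ j : Fin p, (j : ℕ) < k → y j = x j), joint θ y
        = ∏ j ∈ univ.filter (fun j : Fin p => (j : ℕ) < k), θ j x (x j) := by
  induction m with
  | zero =>
    intro k hk x
    have hfk : univ.filter (fun y : ∀ j, X j => ∀ j : Fin p, (j : ℕ) < k → y j = x j)
        = {x} := by
      ext y
      simp only [mem_filter, mem_univ, true_and, mem_singleton]
      constructor
      · intro h; funext j; exact h j (by have := j.isLt; omega)
      · rintro rfl; exact fun _ _ => rfl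
    have hfj : univ.filter (fun j : Fin p => (j : ℕ) < k) = univ := by
      ext j; simp only [mem_filter, mem_univ, true_and, iff_true]
      have := j.isLt; omega
    rw [hfk, hfj, Finset.sum_singleton]; rfl
  | succ m ih =>
    intro k hk x
    have hkp : k < p := by omega
    set κ : Fin p := ⟨k, hkp⟩ with hκ
    classical
    have hmaps : ∀ y ∈ univ.filter (fun y : ∀ j, X j => ∀ j : Fin p, (j : ℕ) < k → y j = x j),
        (fun y : ∀ j, X j => y κ) y ∈ (univ : Finset (X κ)) := fun _ _ => mem_univ _
    rw [← Finset.sum_fiberwise_of_maps_to hmaps (joint θ)]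
    have hfib : ∀ a : X κ,
        (univ.filter (fun y : ∀ j, X j => ∀ j : Fin p, (j : ℕ) < k → y j = x j)).filter
            (fun y => y κ = a)
          = univ.filter (fun y : ∀ j, X j =>
              ∀ j : Fin p, (j : ℕ) < k + 1 → y j = Function.update x κ a j) := by
      intro a
      ext y
      simp only [mem_filter, mem_univ, true_and]
      constructor
      · rintro ⟨h1, h2⟩ j hj
        rcases Nat.lt_succ_iff_lt_or_eq.mp hj with hj' | hj'
        · rw [h1 j hj', Function.update_of_ne (by
            intro h; subst h; exact absurd hj' (lt_irrefl _)) _ _]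
        · have : j = κ := Fin.ext hj'
          subst this
          rw [h2, Function.update_self]
      · intro h
        constructor
        · intro j hj
          rw [h j (by omega), Function.update_of_ne (by
            intro hh; subst hh; exact absurd hj (lt_irrefl _)) _ _]
        · have := h κ (Nat.lt_succ_self k)
          rwa [Function.update_self] at this
    calc ∑ a : X κ, ∑ y ∈ (univ.filter (fun y : ∀ j, X j =>
            ∀ j : Fin p, (j : ℕ) < k → y j = x j)).filter (fun y => y κ = a), joint θ y
        = ∑ a : X κ, (∏ j ∈ univ.filter (fun j : Fin p => (j : ℕ) < k), θ j x (x j))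
            * θ κ x a := by
          refine Finset.sum_congr rfl fun a _ => ?_
          rw [hfib a, ih (k + 1) (by omega) (Function.update x κ a)]
          exact prod_update_theta hθ κ x a
      _ = ∏ j ∈ univ.filter (fun j : Fin p => (j : ℕ) < k), θ j x (x j) := by
          rw [← Finset.mul_sum, hθ.2.1 κ x, mul_one]


lemma condP_eq (T : StagedTree p X 1) {θ} (hθ : IsParam T θ) (i : Fin p)
    (E : Set (∀ j, X j))
    (hE : ∀ y y' : ∀ j, X j, (∀ j : Fin p, j < i → y j = y' j) → y ∈ E → y' ∈ E)
    (a : X i) :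
    ∃ t : Finset (∀ j, X j),
      (∀ c ∈ t, c ∈ E) ∧
      (E.Nonempty → t.Nonempty) ∧
      (∀ y ∈ E, ∃ c ∈ t, θ i c = θ i y) ∧
      condP (joint θ) i a E =
        (∑ c ∈ t, (∏ j ∈ univ.filter (fun j : Fin p => (j : ℕ) < (i : ℕ)), θ j c (c j))
            * θ i c a) /
        (∑ c ∈ t, ∏ j ∈ univ.filter (fun j : Fin p => (j : ℕ) < (i : ℕ)), θ j c (c j)) := by
  classical
  rcases Set.eq_empty_or_nonempty E with rfl | ⟨x₀, hx₀⟩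
  · refine ⟨∅, by simp, by simp [Set.not_nonempty_empty], by simp, ?_⟩
    simp [condP]
  · set g : (∀ j, X j) → (∀ j, X j) := fun y j => if (j : ℕ) < (i : ℕ) then y j else x₀ j
      with hg
    have hg_agree : ∀ (y : ∀ j, X j) (j : Fin p), j < i → g y j = y j := by
      intro y j hj
      simp only [hg, if_pos (show (j : ℕ) < (i : ℕ) from hj)]
    have hg_fix : ∀ (y : ∀ j, X j) (j : Fin p), ¬ (j : ℕ) < (i : ℕ) → g y j = x₀ j := by
      intro y j hj
      simp only [hg, if_neg hj]
    have hgE : ∀ y ∈ E, g y ∈ E := fun y hy =>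
      hE y (g y) (fun j hj => (hg_agree y j hj).symm) hy
    set t : Finset (∀ j, X j) := (univ.filter (· ∈ E)).image g with ht
    have htE : ∀ c ∈ t, c ∈ E := by
      intro c hc
      simp only [ht, mem_image, mem_filter, mem_univ, true_and] at hc
      obtain ⟨y, hy, rfl⟩ := hc
      exact hgE y hy
    have htfix : ∀ c ∈ t, ∀ j : Fin p, ¬ (j : ℕ) < (i : ℕ) → c j = x₀ j := by
      intro c hc j hj
      simp only [ht, mem_image, mem_filter, mem_univ, true_and] at hc
      obtain ⟨y, hy, rfl⟩ := hc
      exact hg_fix y j hj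
    have hmem : ∀ y ∈ E, g y ∈ t := by
      intro y hy
      exact mem_image_of_mem g (mem_filter.mpr ⟨mem_univ y, hy⟩)
    refine ⟨t, htE, fun _ => ⟨g x₀, hmem x₀ hx₀⟩, ?_, ?_⟩
    · intro y hy
      exact ⟨g y, hmem y hy, theta_agree hθ i (hg_agree y)⟩
    · -- the formula
      have key : ∀ (s : Set (∀ j, X j)),
          (∀ y, y ∈ s → y ∈ E) →
          (∀ y ∈ E, ∀ y' : ∀ j, X j, (∀ j : Fin p, j < i → y j = y' j) → (y ∈ s ↔ y' ∈ s)) →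
          True := fun _ _ _ => trivial
      -- numerator
      have hnum : ∑ y : ∀ j, X j, ({y | y ∈ E ∧ y i = a}).indicator (joint θ) y
          = ∑ c ∈ t, (∏ j ∈ univ.filter (fun j : Fin p => (j : ℕ) < (i : ℕ)), θ j c (c j))
              * θ i c a := by
        have h1 : ∑ y : ∀ j, X j, ({y | y ∈ E ∧ y i = a}).indicator (joint θ) y
            = ∑ y ∈ univ.filter (fun y : ∀ j, X j => y ∈ E ∧ y i = a), joint θ y := by
          rw [Finset.sum_filter]
          refine Finset.sum_congr rfl fun y _ => ?_
          simp [Set.indicator_apply]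
        have hmaps : ∀ y ∈ univ.filter (fun y : ∀ j, X j => y ∈ E ∧ y i = a), g y ∈ t := by
          intro y hy
          simp only [mem_filter, mem_univ, true_and] at hy
          exact hmem y hy.1
        rw [h1, ← Finset.sum_fiberwise_of_maps_to hmaps (joint θ)]
        refine Finset.sum_congr rfl fun c hc => ?_
        have hcE := htE c hc
        have hcfix := htfix c hc
        have hfib : (univ.filter (fun y : ∀ j, X j => y ∈ E ∧ y i = a)).filter
              (fun y => g y = c)
            = univ.filter (fun y : ∀ j, X j =>
                ∀ j : Fin p, (j : ℕ) < (i : ℕ) + 1 → y j = Function.update c i a j) := by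
          ext y
          simp only [mem_filter, mem_univ, true_and]
          constructor
          · rintro ⟨⟨hyE, hya⟩, hgy⟩ j hj
            rcases Nat.lt_succ_iff_lt_or_eq.mp hj with hj' | hj'
            · have hji : j ≠ i := fun h => by subst h; exact absurd hj' (lt_irrefl _)
              rw [Function.update_of_ne hji, ← hgy, hg_agree y j hj']
            · have : j = i := Fin.ext hj'
              subst this
              rw [Function.update_self, hya]
          · intro h
            have hagree : ∀ j : Fin p, j < i → y j = c j := by
              intro j hj
              have hji : j ≠ i := Fin.ne_of_lt hj
              rw [h j (Nat.lt_succ_of_lt hj), Function.update_of_ne hji]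
            have hya : y i = a := by
              have := h i (Nat.lt_succ_self _)
              rwa [Function.update_self] at this
            refine ⟨⟨hE c y (fun j hj => (hagree j hj).symm) hcE, hya⟩, ?_⟩
            funext j
            by_cases hj : (j : ℕ) < (i : ℕ)
            · rw [hg_agree y j hj, hagree j hj]
            · rw [hg_fix y j hj, hcfix j hj]
        rw [hfib, sum_tail hθ (p - ((i : ℕ) + 1)) ((i : ℕ) + 1) (by have := i.isLt; omega)
          (Function.update c i a)]
        exact prod_update_theta hθ i c a
      -- denominator
      have hden : ∑ y : ∀ j, X j, E.indicator (joint θ) y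
          = ∑ c ∈ t, ∏ j ∈ univ.filter (fun j : Fin p => (j : ℕ) < (i : ℕ)), θ j c (c j) := by
        have h1 : ∑ y : ∀ j, X j, E.indicator (joint θ) y
            = ∑ y ∈ univ.filter (fun y : ∀ j, X j => y ∈ E), joint θ y := by
          rw [Finset.sum_filter]
          refine Finset.sum_congr rfl fun y _ => ?_
          simp [Set.indicator_apply]
        have hmaps : ∀ y ∈ univ.filter (fun y : ∀ j, X j => y ∈ E), g y ∈ t := by
          intro y hy
          simp only [mem_filter, mem_univ, true_and] at hy
          exact hmem y hy
        rw [h1, ← Finset.sum_fiberwise_of_maps_to hmaps (joint θ)]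
        refine Finset.sum_congr rfl fun c hc => ?_
        have hcE := htE c hc
        have hcfix := htfix c hc
        have hfib : (univ.filter (fun y : ∀ j, X j => y ∈ E)).filter (fun y => g y = c)
            = univ.filter (fun y : ∀ j, X j =>
                ∀ j : Fin p, (j : ℕ) < (i : ℕ) → y j = c j) := by
          ext y
          simp only [mem_filter, mem_univ, true_and]
          constructor
          · rintro ⟨hyE, hgy⟩ j hj
            rw [← hgy, hg_agree y j hj]
          · intro h
            refine ⟨hE c y (fun j hj => (h j hj).symm) hcE, ?_⟩
            funext j
            by_cases hj : (j : ℕ) < (i : ℕ)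
            · rw [hg_agree y j hj, h j hj]
            · rw [hg_fix y j hj, hcfix j hj]
        rw [hfib, sum_tail hθ (p - (i : ℕ)) (i : ℕ) (by have := i.isLt; omega) c]
      rw [condP, hnum, hden]

lemma W_pos {T : StagedTree p X 1} {θ} (hθ : IsParam T θ) (i : Fin p) (c : ∀ j, X j) :
    0 < ∏ j ∈ univ.filter (fun j : Fin p => (j : ℕ) < (i : ℕ)), θ j c (c j) :=
  Finset.prod_pos fun j _ => hθ.1 j c (c j)

lemma condP_of_const (T : StagedTree p X 1) {θ} (hθ : IsParam T θ) (i : Fin p)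
    (E : Set (∀ j, X j))
    (hE : ∀ y y' : ∀ j, X j, (∀ j : Fin p, j < i → y j = y' j) → y ∈ E → y' ∈ E)
    (x : ∀ j, X j) (hx : x ∈ E)
    (hall : ∀ c ∈ E, θ i c = θ i x) (a : X i) :
    condP (joint θ) i a E = θ i x a := by
  obtain ⟨t, htE, htne, -, hval⟩ := condP_eq T hθ i E hE a
  have hne := htne ⟨x, hx⟩
  have hD : 0 < ∑ c ∈ t, ∏ j ∈ univ.filter (fun j : Fin p => (j : ℕ) < (i : ℕ)), θ j c (c j) :=
    Finset.sum_pos (fun c _ => W_pos hθ i c) hne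
  rw [hval, Finset.sum_congr rfl (fun c hc => by rw [hall c (htE c hc)]), ← Finset.sum_mul]
  exact mul_div_cancel_left₀ _ hD.ne'

lemma condP_gt (T : StagedTree p X 1) {θ} (hθ : IsParam T θ) (i : Fin p)
    (E : Set (∀ j, X j))
    (hE : ∀ y y' : ∀ j, X j, (∀ j : Fin p, j < i → y j = y' j) → y ∈ E → y' ∈ E)
    (a : X i) (v : ℝ)
    (hge : ∀ c : ∀ j, X j, v ≤ θ i c a)
    (y : ∀ j, X j) (hy : y ∈ E) (hgt : v < θ i y a) :
    v < condP (joint θ) i a E := by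
  obtain ⟨t, htE, htne, hrep, hval⟩ := condP_eq T hθ i E hE a
  obtain ⟨c₀, hc₀t, hc₀⟩ := hrep y hy
  have hne : t.Nonempty := ⟨c₀, hc₀t⟩
  have hD : 0 < ∑ c ∈ t, ∏ j ∈ univ.filter (fun j : Fin p => (j : ℕ) < (i : ℕ)), θ j c (c j) :=
    Finset.sum_pos (fun c _ => W_pos hθ i c) hne
  rw [hval, lt_div_iff₀ hD, Finset.mul_sum]
  refine Finset.sum_lt_sum (fun c _ => ?_) ⟨c₀, hc₀t, ?_⟩
  · rw [mul_comm]
    exact mul_le_mul_of_nonneg_left (hge c) (W_pos hθ i c).le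
  · rw [mul_comm (v : ℝ)]
    have : θ i c₀ a = θ i y a := by rw [hc₀]
    exact mul_lt_mul_of_pos_left (this ▸ hgt) (W_pos hθ i c₀)



lemma ctxEvent_local (i : Fin p) (x : ∀ j, X j) :
    ∀ y y' : ∀ j, X j, (∀ j : Fin p, j < i → y j = y' j) →
      y ∈ ctxEvent i x → y' ∈ ctxEvent i x := by
  intro y y' h hy j hj
  rw [← h j hj]
  exact hy j hj

lemma stageEvent_local (S : StagedTree p X π) (i : Fin p) (w : ∀ j, X j) :
    ∀ y y' : ∀ j, X j, (∀ j : Fin p, j < i → y j = y' j) →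
      y ∈ stageEvent S i w → y' ∈ stageEvent S i w := by
  rintro y y' h ⟨z, hz1, hz2⟩
  exact ⟨z, hz1, fun j h1 h2 => (hz2 j h1 h2).trans (h j h2)⟩

lemma exists_sep (T : StagedTree p X 1) [∀ j, Nontrivial (X j)] (i : Fin p) (x : ∀ j, X j) :
    ∃ (θ : ∀ j : Fin p, (∀ m, X m) → X j → ℝ) (a : X i) (v : ℝ),
      IsParam T θ ∧ θ i x a = v ∧ (∀ c, v ≤ θ i c a) ∧
      (∀ c, ¬ T.stage i x c → v < θ i c a) := by
  classical
  set n : ℝ := (Fintype.card (X i) : ℝ) with hn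
  have hn2 : (2 : ℝ) ≤ n := by
    have := Fintype.one_lt_card (α := X i)
    rw [hn]
    exact_mod_cast this
  have hn0 : (0 : ℝ) < n := by linarith
  set s : ℝ := 1 / n ^ 2 with hs
  have hs0 : 0 < s := by positivity
  have hsn : s < 1 / n := by
    rw [hs, div_lt_div_iff₀ (by positivity) hn0]
    nlinarith
  obtain ⟨a⟩ := (inferInstance : Nonempty (X i))
  set qf : X i → ℝ := fun b => (1 / n - s) + (if b = a then n * s else 0) with hqf
  have hqf_pos : ∀ b, 0 < qf b := by
    intro b
    rw [hqf]
    dsimp only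
    split_ifs
    · nlinarith
    · simpa using sub_pos.mpr hsn
  have hqf_sum : ∑ b : X i, qf b = 1 := by
    rw [hqf]
    rw [Finset.sum_add_distrib, Finset.sum_const, Finset.sum_ite_eq' univ a, if_pos (mem_univ a),
      Finset.card_univ, nsmul_eq_mul, ← hn]
    field_simp
    ring
  have hqfa : qf a = 1 / n + (n - 1) * s := by
    rw [hqf]; simp; ring
  set G : (∀ m, X m) → X i → ℝ :=
    fun c _b => if T.stage i x c then (1 : ℝ) / n else qf _b with hG
  set θ : ∀ j : Fin p, (∀ m, X m) → X j → ℝ :=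
    Function.update (fun j : Fin p => fun (_ : ∀ m, X m) (_ : X j) =>
      (1 : ℝ) / (Fintype.card (X j))) i G with hθdef
  have hθi : θ i = G := by rw [hθdef]; exact Function.update_self _ _ _
  have hθj : ∀ j : Fin p, j ≠ i → θ j = fun (_ : ∀ m, X m) (_ : X j) =>
      (1 : ℝ) / (Fintype.card (X j)) := fun j hj => by
    rw [hθdef]; exact Function.update_of_ne hj _ _
  have hcard_pos : ∀ j : Fin p, (0 : ℝ) < 1 / (Fintype.card (X j)) := by
    intro j
    have : 0 < Fintype.card (X j) := Fintype.card_pos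
    positivity
  have hparam : IsParam T θ := by
    refine ⟨?_, ?_, ?_⟩
    · intro j c b
      rcases eq_or_ne j i with rfl | hj
      · rw [hθi, hG]
        dsimp only
        split_ifs
        · exact hcard_pos j
        · exact hqf_pos b
      · rw [hθj j hj]
        exact hcard_pos j
    · intro j c
      rcases eq_or_ne j i with rfl | hj
      · rw [hθi, hG]
        dsimp only
        split_ifs
        · rw [Finset.sum_const, Finset.card_univ, nsmul_eq_mul, ← hn]
          field_simp
        · exact hqf_sum
      · rw [hθj j hj]
        rw [Finset.sum_const, Finset.card_univ, nsmul_eq_mul]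
        have : (0:ℝ) < (Fintype.card (X j) : ℝ) := by
          exact_mod_cast (Fintype.card_pos : 0 < Fintype.card (X j))
        field_simp
    · intro j c c' hst
      rcases eq_or_ne j i with rfl | hj
      · rw [hθi, hG]
        funext b
        dsimp only
        by_cases h : T.stage j x c
        · rw [if_pos h, if_pos ((T.stage_equiv j).trans h hst)]
        · rw [if_neg h, if_neg (fun h' => h ((T.stage_equiv j).trans h' ((T.stage_equiv j).symm hst)))]
      · rw [hθj j hj]
  refine ⟨θ, a, 1 / n, hparam, ?_, ?_, ?_⟩
  · rw [hθi, hG]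
    dsimp only
    rw [if_pos ((T.stage_equiv i).refl x)]
  · intro c
    rw [hθi, hG]
    dsimp only
    split_ifs
    · exact le_refl _
    · rw [hqfa]; nlinarith
  · intro c hc
    rw [hθi, hG]
    dsimp only
    rw [if_neg hc, hqfa]
    nlinarith

/-- correctness of the CID algorithm.  The interventional
distribution `P(X_i | do(X_{[i-1]} = x_{[i-1]}))` is wrongly inferred by `S` with
respect to `T` iff there is an `S`-stage `A` with `x_{[i-1]} ∈ B_A` such that `B_A`
contains two contexts lying in different stages of `T` at depth `i-1`; consequently,
the algorithm counting for each `i` the proportion of contexts satisfying this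
condition and summing over `i` outputs exactly `CID(T, S)`. -/
theorem wronglyInferred_iff_algWrong [∀ i, Nontrivial (X i)]
    (T : StagedTree p X 1) (S : StagedTree p X π) :
    (∀ (i : Fin p) (x : ∀ j, X j), WronglyInferred T S i x ↔ AlgWrong T S i x) ∧
    CID T S = ∑ i : Fin p,
      (Nat.card {x : ∀ j, X j // AlgWrong T S i x} : ℝ) /
        (Nat.card (∀ j, X j) : ℝ) := by
  have main : ∀ (i : Fin p) (x : ∀ j, X j), WronglyInferred T S i x ↔ AlgWrong T S i x := by
    intro i x
    constructor
    · -- Wrong → Alg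
      rintro ⟨P, ⟨θ, hθ, rfl⟩, a, w, hw, hne⟩
      by_contra hA
      apply hne
      have hxw : x ∈ stageEvent S i w :=
        ⟨w, (S.stage_equiv i).refl w, fun j _ hj => hw j hj⟩
      have hall : ∀ c ∈ stageEvent S i w, θ i c = θ i x := by
        intro c hc
        refine (hθ.2.2 i x c ?_).symm
        by_contra hcn
        exact hA ⟨w, hxw, x, hxw, c, hc, hcn⟩
      have hall_ctx : ∀ c ∈ ctxEvent i x, θ i c = θ i x := fun c hc =>
        theta_agree hθ i (fun j hj => hc j hj)
      rw [condP_of_const T hθ i (ctxEvent i x) (ctxEvent_local i x) x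
          (fun j hj => rfl) hall_ctx a,
        condP_of_const T hθ i (stageEvent S i w) (stageEvent_local S i w) x hxw hall a]
    · -- Alg → Wrong
      rintro ⟨w, hxw, y, hy, y', hy', hnst⟩
      -- a witness in the stage event not T-stage-equivalent to x
      have hbad : ∃ yb ∈ stageEvent S i w, ¬ T.stage i x yb := by
        by_cases h : T.stage i x y
        · exact ⟨y', hy', fun h' => hnst ((T.stage_equiv i).trans ((T.stage_equiv i).symm h) h')⟩
        · exact ⟨y, hy, h⟩
      obtain ⟨yb, hyb, hnb⟩ := hbad
      obtain ⟨z, hz1, hz2⟩ := hxw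
      -- a representative of the stage of w agreeing with x below i
      set w' : ∀ j, X j := fun j => if j < i then x j else z j with hw'def
      have hw' : ∀ j : Fin p, j < i → w' j = x j := by
        intro j hj
        simp only [hw'def, if_pos hj]
      have hw'z : S.stage i w' z := by
        refine S.stage_local i w' z (fun j hj => ?_)
        by_cases h2 : j < i
        · simp only [hw'def, if_pos h2]
          exact (hz2 j hj h2).symm
        · simp only [hw'def, if_neg h2]
      have hw'w : S.stage i w' w := (S.stage_equiv i).trans hw'z hz1
      have hEE : stageEvent S i w' = stageEvent S i w := by
        ext u
        constructor <;> rintro ⟨z', h1, h2⟩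
        · exact ⟨z', (S.stage_equiv i).trans h1 hw'w, h2⟩
        · exact ⟨z', (S.stage_equiv i).trans h1 ((S.stage_equiv i).symm hw'w), h2⟩
      obtain ⟨θ, a, v, hθ, hxa, hge, hgt⟩ := exists_sep T i x
      refine ⟨joint θ, ⟨θ, hθ, rfl⟩, a, w', hw', ?_⟩
      have hall_ctx : ∀ c ∈ ctxEvent i x, θ i c = θ i x := fun c hc =>
        theta_agree hθ i (fun j hj => hc j hj)
      have h1 : condP (joint θ) i a (ctxEvent i x) = v := by
        rw [condP_of_const T hθ i (ctxEvent i x) (ctxEvent_local i x) x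
          (fun j hj => rfl) hall_ctx a, hxa]
      have h2 : v < condP (joint θ) i a (stageEvent S i w') := by
        rw [hEE]
        exact condP_gt T hθ i (stageEvent S i w) (stageEvent_local S i w) a v
          (fun c => hge c) yb hyb (hgt yb hnb)
      rw [h1]
      exact ne_of_lt h2
  refine ⟨main, ?_⟩
  rw [CID]
  refine Finset.sum_congr rfl fun i _ => ?_
  congr 2
  exact Nat.card_congr (Equiv.subtypeEquivRight (main i))
end

section
/- Let T be the staged tree over three binary variables in order (X_1, X_2, X_3) whose staging at depth 1 puts the contexts X_1 = 0 and X_1 = 1 in the same stage, and at depth 2 has stages {(0,0), (0,1)}, {(1,0)}, {(1,1)}. Then there exists P ∈ M_T (e.g., one with P(X_2 = 0 | X_1 = 1) = 1/2 and P(X_3 | X_1 = 1, X_2 = 0) ≠ P(X_3 | X_1 = 1, X_2 = 1)) such that P(X_3 = x_3 | X_1 = 1, X_2 = 1) ≠ P(X_3 = x_3 | X_1 = 1) for some x_3 ∈ {0,1}; consequently the interventional distribution P(X_3 | do(X_1 = 1, X_2 = 1)) is wrongly inferred with respect to T by any staged tree S in the order (X_1, X_3, X_2) whose depth-1 stages are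 the singletons {X_1 = 0} and {X_1 = 1}. -/
variable {p : ℕ} {X : Fin p → Type*} [∀ i, Fintype (X i)] [∀ i, DecidableEq (X i)]
  {π : Equiv.Perm (Fin p)}

/-- Three binary variables, encoded over `Bool` (`0 ↦ false`, `1 ↦ true`). -/
abbrev XB : Fin 3 → Type := fun _ => Bool


namespace WIExample

noncomputable def fθ : Bool → Bool → Bool → ℝ := fun b c a =>
  if b = false then 1/2 else if c = false then (if a then 1/3 else 2/3)
  else (if a then 1/4 else 3/4)

noncomputable def θex : ∀ i : Fin 3, (∀ j, XB j) → XB i → ℝ :=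
  fun i x a => if (i : ℕ) = 2 then fθ (x 0) (x 1) a else 1/2

def e3 : Bool × Bool × Bool ≃ (∀ j, XB j) where
  toFun p := ![p.1, p.2.1, p.2.2]
  invFun x := (x 0, x 1, x 2)
  left_inv := by decide
  right_inv := by decide

lemma sum_pi3 (g : (∀ j, XB j) → ℝ) :
    ∑ x : ∀ j, XB j, g x = ∑ a : Bool, ∑ b : Bool, ∑ c : Bool, g ![a, b, c] := by
  rw [← Equiv.sum_comp e3 g, Fintype.sum_prod_type]
  simp [e3, Fintype.sum_prod_type]

lemma joint_eq (x : ∀ j, XB j) : joint θex x = 1/4 * fθ (x 0) (x 1) (x 2) := by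
  simp only [joint, Fin.prod_univ_three]
  show (1:ℝ)/2 * (1/2) * fθ (x 0) (x 1) (x 2) = _
  ring

lemma isParam_θex (T : StagedTree 3 XB 1)
    (hT2 : ∀ x y : ∀ j, XB j,
      T.stage 2 x y ↔ (x 0 = y 0 ∧ (x 0 = false ∨ x 1 = y 1))) :
    IsParam T θex := by
  refine ⟨?_, ?_, ?_⟩
  · intro i x a
    simp only [θex]
    split_ifs with h
    · unfold fθ; split_ifs <;> norm_num
    · norm_num
  · intro i x
    simp only [θex]
    split_ifs with h
    · cases hx0 : x 0 <;> cases hx1 : x 1 <;>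
        simp [fθ, hx0, hx1, Fintype.sum_bool] <;> norm_num
    · rw [Fintype.sum_bool]; norm_num
  · intro i x y h
    funext a
    simp only [θex]
    split_ifs with hi
    · have hi2 : i = 2 := by omega
      subst hi2
      rw [hT2] at h
      obtain ⟨h0, h1⟩ := h
      rcases h1 with hf | hc
      · simp [fθ, hf, ← h0]
      · rw [h0, hc]
    · rfl

lemma condA :
    condP (joint θex) 2 true {y : ∀ j, XB j | y 0 = true ∧ y 1 = true} = 1/4 := by
  unfold condP
  rw [sum_pi3, sum_pi3]
  simp [Set.indicator_apply, joint_eq, fθ]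
  norm_num

lemma condB :
    condP (joint θex) 2 true {y : ∀ j, XB j | y 0 = true} = 7/24 := by
  unfold condP
  rw [sum_pi3, sum_pi3]
  simp [Set.indicator_apply, joint_eq, fθ]
  norm_num

end WIExample

/-- Let `T` be the staged tree over three binary variables in the
order `(X₁, X₂, X₃)` whose staging at depth 1 puts the contexts `X₁ = 0` and `X₁ = 1`
in the same stage, and whose staging at depth 2 has stages `{(0,0),(0,1)}, {(1,0)},
{(1,1)}`.  Then there exist `P ∈ M_T` and a value `a` of `X₃` with
`P(X₃ = a | X₁ = 1, X₂ = 1) ≠ P(X₃ = a | X₁ = 1)`; consequently the interventional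
distribution `P(X₃ | do(X₁ = 1, X₂ = 1))` is wrongly inferred with respect to `T`
by any staged tree `S` in the order `(X₁, X₃, X₂)` whose depth-1 stages are the
singletons `{X₁ = 0}` and `{X₁ = 1}`. -/

theorem wrongly_inferred_example
    (T : StagedTree 3 XB 1)
    (hT1 : ∀ x y : ∀ j, XB j, T.stage 1 x y)
    (hT2 : ∀ x y : ∀ j, XB j,
      T.stage 2 x y ↔ (x 0 = y 0 ∧ (x 0 = false ∨ x 1 = y 1))) :
    (∃ P ∈ Model T, ∃ a : Bool,
      condP P 2 a {y : ∀ j, XB j | y 0 = true ∧ y 1 = true} ≠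
        condP P 2 a {y : ∀ j, XB j | y 0 = true}) ∧
    ∀ S : StagedTree 3 XB (Equiv.swap 1 2),
      (∀ x y : ∀ j, XB j, S.stage 2 x y ↔ x 0 = y 0) →
      ∀ x : ∀ j, XB j, x 0 = true → x 1 = true → WronglyInferred T S 2 x := by
  constructor
  · exact ⟨joint WIExample.θex, ⟨WIExample.θex, WIExample.isParam_θex T hT2, rfl⟩, true,
      by rw [WIExample.condA, WIExample.condB]; norm_num⟩
  · intro S hS x hx0 hx1
    refine ⟨joint WIExample.θex, ⟨WIExample.θex, WIExample.isParam_θex T hT2, rfl⟩,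
      true, x, fun j _ => rfl, ?_⟩
    have hctx : ctxEvent 2 x = {y : ∀ j, XB j | y 0 = true ∧ y 1 = true} := by
      ext y
      constructor
      · intro h
        exact ⟨(h 0 (by decide)).trans hx0, (h 1 (by decide)).trans hx1⟩
      · rintro ⟨h0, h1⟩ j hj
        fin_cases j
        · exact h0.trans hx0.symm
        · exact h1.trans hx1.symm
        · exact absurd hj (by decide)
    have hstg : stageEvent S 2 x = {y : ∀ j, XB j | y 0 = true} := by
      ext y
      constructor
      · rintro ⟨z, hz, hz'⟩
        have h0 : z 0 = y 0 := hz' 0 (by decide) (by decide)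
        have := (hS z x).mp hz
        simp only [Set.mem_setOf_eq]
        rw [← h0, this, hx0]
      · intro hy
        refine ⟨y, (hS y x).mpr ?_, fun j _ _ => rfl⟩
        rw [hy, hx0]
    rw [hctx, hstg, WIExample.condA, WIExample.condB]
    norm_num
end

section
/- Let T be the staged tree over three binary variables in order (X_1, X_2, X_3) whose staging at depth 1 puts the contexts X_1 = 0 and X_1 = 1 in the same stage, and at depth 2 has stages {(0,0), (0,1)}, {(1,0)}, {(1,1)}. Let S be the staged tree in the order (X_1, X_3, X_2) whose depth-2 staging over contexts (x_1, x_3) has stages {(0,0), (1,1)} and {(0,1), (1,0)}. Then for every P ∈ M_T and every x_2 ∈ {0,1}: P(X_2 = x_2 | X_1 = 1) = P(X_2 = x_2) = P(X_2 = x_2 | X_1 ∈ {0,1}); consequently the interventional distribution P(X_2 | do(X_1 = 1)) is correctly inferred by S with respect to T. -/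
variable {p : ℕ} {X : Fin p → Type*} [∀ i, Fintype (X i)] [∀ i, DecidableEq (X i)]
  {π : Equiv.Perm (Fin p)}

/-- Auxiliary equivalence used to enumerate the eight binary vectors. -/
def e3Aux : Bool × Bool × Bool ≃ (∀ j, XB j) where
  toFun t := ![t.1, t.2.1, t.2.2]
  invFun x := (x 0, x 1, x 2)
  left_inv t := rfl
  right_inv x := by funext j; fin_cases j <;> rfl

lemma sum_eight (f : (∀ j, XB j) → ℝ) : ∑ x : ∀ j, XB j, f x =
    f ![false,false,false] + f ![false,false,true] + f ![false,true,false] + f ![false,true,true]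
  + f ![true,false,false] + f ![true,false,true] + f ![true,true,false] + f ![true,true,true] := by
  rw [← Fintype.sum_equiv e3Aux (fun t => f (e3Aux t)) f (fun t => rfl)]
  simp [Fintype.sum_prod_type, e3Aux]
  dsimp only [DFunLike.coe, EquivLike.coe]
  ring

/-- Let `T` be the staged tree over three binary variables in the
order `(X₁, X₂, X₃)` whose staging at depth 1 puts the contexts `X₁ = 0` and `X₁ = 1`
in the same stage, and whose staging at depth 2 has stages `{(0,0),(0,1)}, {(1,0)},
{(1,1)}`.  Let `S` be the staged tree in the order `(X₁, X₃, X₂)` whose depth-2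
staging over the contexts `(x₁, x₃)` has the two stages `{(0,0),(1,1)}` and
`{(0,1),(1,0)}`.  Then for every `P ∈ M_T` and every `b`:
`P(X₂ = b | X₁ = 1) = P(X₂ = b) = P(X₂ = b | X₁ ∈ {0,1})`; consequently the
interventional distribution `P(X₂ | do(X₁ = 1))` is correctly inferred by `S` with
respect to `T`. -/
theorem correctly_inferred_example_two
    (T : StagedTree 3 XB 1)
    (hT1 : ∀ x y : ∀ j, XB j, T.stage 1 x y)
    (hT2 : ∀ x y : ∀ j, XB j,
      T.stage 2 x y ↔ (x 0 = y 0 ∧ (x 0 = false ∨ x 1 = y 1)))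
    (S : StagedTree 3 XB (Equiv.swap 1 2))
    (hS : ∀ x y : ∀ j, XB j, S.stage 1 x y ↔ ((x 0 = x 2) ↔ (y 0 = y 2))) :
    (∀ P ∈ Model T, ∀ b : Bool,
      condP P 1 b {y : ∀ j, XB j | y 0 = true} =
          (∑ x : ∀ j, XB j, if x 1 = b then P x else 0) ∧
        (∑ x : ∀ j, XB j, if x 1 = b then P x else 0) =
          condP P 1 b (Set.univ : Set (∀ j, XB j))) ∧
    ∀ x : ∀ j, XB j, x 0 = true → ¬ WronglyInferred T S 1 x := by

  classical
  have key : ∀ P ∈ Model T, ∀ b : Bool,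
      condP P 1 b {y : ∀ j, XB j | y 0 = true} =
          (∑ x : ∀ j, XB j, if x 1 = b then P x else 0) ∧
        (∑ x : ∀ j, XB j, if x 1 = b then P x else 0) =
          condP P 1 b (Set.univ : Set (∀ j, XB j)) := by
    rintro P ⟨θ, ⟨hpos, hsum, hconst⟩, rfl⟩ b
    set z : ∀ j, XB j := ![true, true, true] with hz
    have hθ0 : ∀ x : ∀ j, XB j, θ 0 x = θ 0 z := by
      intro x
      refine hconst 0 x z (T.stage_local 0 x z ?_)
      intro j hj
      simp [Equiv.Perm.one_symm, Equiv.Perm.one_apply] at hj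
    have hθ1 : ∀ x : ∀ j, XB j, θ 1 x = θ 1 z := fun x => hconst 1 x z (hT1 x z)
    have hθ2 : ∀ x : ∀ j, XB j, θ 2 x = θ 2 ![x 0, x 1, true] := by
      intro x
      refine hconst 2 x _ (T.stage_local 2 x _ ?_)
      intro j hj
      simp [Equiv.Perm.one_symm, Equiv.Perm.one_apply] at hj
      fin_cases j <;> simp_all
    set C : Bool → ℝ := θ 0 z with hCdef
    set D : Bool → ℝ := θ 1 z with hDdef
    set E : Bool → Bool → Bool → ℝ := fun u v => θ 2 ![u, v, true] with hEdef
    have hPval : ∀ u v w : Bool, joint θ ![u,v,w] = C u * D v * E u v w := by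
      intro u v w
      unfold joint
      rw [Fin.prod_univ_three]
      rw [hθ0 ![u,v,w], hθ1 ![u,v,w], hθ2 ![u,v,w]]
      simp [hCdef, hDdef, hEdef, mul_assoc]
    have hC : C false + C true = 1 := by
      have := hsum 0 z
      rwa [Fintype.sum_bool, add_comm] at this
    have hD : D false + D true = 1 := by
      have := hsum 1 z
      rwa [Fintype.sum_bool, add_comm] at this
    have hE : ∀ u v, E u v false + E u v true = 1 := by
      intro u v
      have := hsum 2 ![u, v, true]
      rw [Fintype.sum_bool, add_comm] at this
      simpa [hEdef] using this
    have hCt : 0 < C true := hpos 0 z true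
    have hDpos : ∀ a, 0 < D a := fun a => hpos 1 z a
    -- the middle sum
    have hmid : (∑ x : ∀ j, XB j, if x 1 = b then joint θ x else 0) = D b := by
      rw [sum_eight]
      simp only [hPval]
      cases b
      · simp
        linear_combination (C false * D false) * hE false false +
          (C true * D false) * hE true false + D false * hC
      · simp
        linear_combination (C false * D true) * hE false true +
          (C true * D true) * hE true true + D true * hC
    constructor
    · -- condP with event {y 0 = true}
      unfold condP
      have hnum : (∑ x : ∀ j, XB j,
          ({y | y ∈ {y : ∀ j, XB j | y 0 = true} ∧ y 1 = b}).indicator (joint θ) x)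
          = C true * D b := by
        rw [sum_eight]
        simp only [Set.indicator_apply, Set.mem_setOf_eq, Matrix.cons_val_zero,
          Matrix.cons_val_one, Matrix.head_cons, hPval]
        cases b
        · simp
          linear_combination (C true * D false) * hE true false
        · simp
          linear_combination (C true * D true) * hE true true
      have hden : (∑ x : ∀ j, XB j,
          ({y : ∀ j, XB j | y 0 = true}).indicator (joint θ) x) = C true := by
        rw [sum_eight]
        simp only [Set.indicator_apply, Set.mem_setOf_eq, Matrix.cons_val_zero, hPval]
        simp
        linear_combination (C true * D false) * hE true false +
          (C true * D true) * hE true true + C true * hD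
      rw [hnum, hden, hmid, mul_div_cancel_left₀ _ (ne_of_gt hCt)]
    · -- condP with univ
      unfold condP
      have hnum : (∑ x : ∀ j, XB j,
          ({y | y ∈ (Set.univ : Set (∀ j, XB j)) ∧ y 1 = b}).indicator (joint θ) x)
          = D b := by
        rw [sum_eight]
        simp only [Set.indicator_apply, Set.mem_setOf_eq, Set.mem_univ, true_and,
          Matrix.cons_val_one, Matrix.head_cons, hPval]
        cases b
        · simp
          linear_combination (C false * D false) * hE false false +
            (C true * D false) * hE true false + D false * hC
        · simp
          linear_combination (C false * D true) * hE false true +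
            (C true * D true) * hE true true + D true * hC
      have hden : (∑ x : ∀ j, XB j,
          (Set.univ : Set (∀ j, XB j)).indicator (joint θ) x) = 1 := by
        rw [sum_eight]
        simp only [Set.indicator_univ, hPval]
        linear_combination (C false * D false) * hE false false +
          (C true * D false) * hE true false + (C false * D true) * hE false true +
          (C true * D true) * hE true true + C false * hD + C true * hD + hC
      rw [hnum, hden, hmid, div_one]
  refine ⟨key, ?_⟩
  rintro x hx ⟨P, hP, a, w, hw, hne⟩
  have h1 := (key P hP a).1
  have h2 := (key P hP a).2
  have hctx : ctxEvent 1 x = {y : ∀ j, XB j | y 0 = true} := by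
    ext y
    simp only [ctxEvent, Set.mem_setOf_eq]
    constructor
    · intro h
      rw [h 0 (by decide)]; exact hx
    · intro h j hj
      have hj0 : j = 0 := by fin_cases j <;> simp_all <;> omega
      rw [hj0, h, hx]
  have hstage : stageEvent S 1 w = Set.univ := by
    ext y
    simp only [stageEvent, Set.mem_setOf_eq, Set.mem_univ, iff_true]
    refine ⟨fun j => if j = 2 then (if w 0 = w 2 then y 0 else !y 0) else y j, ?_, ?_⟩
    · rw [hS]
      by_cases hw2 : w 0 = w 2 <;> simp [hw2] <;> cases y 0 <;> simp
    · intro j hj1 hj2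
      have hj0 : j = 0 := by fin_cases j <;> simp_all <;> omega
      rw [hj0]
      show (if (0 : Fin 3) = 2 then _ else y 0) = y 0
      rw [if_neg (by decide)]
  rw [hctx, hstage] at hne
  exact hne (h1.trans h2)
end
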